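/- arXiv:2310.17114 — 9 statements merged into one kernel-verified Lean document; each statement's English description precedes it below -/
import Mathlib

section
/- Let p ≥ 1 and let μ be a probability measure on [0,1]^p having a density p_X with respect to Lebesgue measure with 0 < θ̲ ≤ p_X(u) ≤ θ̄ < ∞ for all u ∈ [0,1]^p; let X ~ μ. Suppose f*(u) = f*_1(u_1) + ⋯ + f*_p(u_p) with each f*_k differentiable on [0,1] with integrable derivative. Then for any rectangle A = ∏_{j=1}^p [ℓ_j, u_j] ⊆ [0,1]^p with ℓ_j < u_j for all j, writing q_A^{(k)}(t) := P(X^{(k)} ≤ t | X ∈ A) for the conditional CDF of the k-th coordinate, one has (sup_{j ∈ {1,…,p}, b ∈ ℝ} √(Δ(A, j, b))) · (∑_{k=1}^p ∫_{ℓ_k}^{u_k} √(q_A^{(k)}(t)(1 − q_A^{(k)}(t))) · |f*_k'(t)| dt) ≥ √(P(X ∈ A)) · Var(f*(X) | X ∈ A). -/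
open MeasureTheory Set Filter
open scoped ENNReal Classical

noncomputable section

def box (p : ℕ) : Set (Fin p → ℝ) := Set.univ.pi fun _ => Set.Icc (0 : ℝ) 1

def condMean {p : ℕ} (μ : Measure (Fin p → ℝ)) (f : (Fin p → ℝ) → ℝ)
    (A : Set (Fin p → ℝ)) : ℝ :=
  (∫ x in A, f x ∂μ) / (μ A).toReal

def condVar {p : ℕ} (μ : Measure (Fin p → ℝ)) (f : (Fin p → ℝ) → ℝ)
    (A : Set (Fin p → ℝ)) : ℝ :=
  (∫ x in A, (f x - condMean μ f A) ^ 2 ∂μ) / (μ A).toReal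

def cellL {p : ℕ} (A : Set (Fin p → ℝ)) (j : Fin p) (b : ℝ) : Set (Fin p → ℝ) :=
  A ∩ {v | v j ≤ b}

def cellR {p : ℕ} (A : Set (Fin p → ℝ)) (j : Fin p) (b : ℝ) : Set (Fin p → ℝ) :=
  A ∩ {v | b < v j}

def impurity {p : ℕ} (μ : Measure (Fin p → ℝ)) (f : (Fin p → ℝ) → ℝ)
    (A : Set (Fin p → ℝ)) (j : Fin p) (b : ℝ) : ℝ :=
  (μ A).toReal * condVar μ f A
    - (μ (cellL A j b)).toReal * condVar μ f (cellL A j b)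
    - (μ (cellR A j b)).toReal * condVar μ f (cellR A j b)

def rect {p : ℕ} (ℓ u : Fin p → ℝ) : Set (Fin p → ℝ) :=
  Set.univ.pi fun j => Set.Icc (ℓ j) (u j)

def condCDFCoord {p : ℕ} (μ : Measure (Fin p → ℝ)) (A : Set (Fin p → ℝ)) (k : Fin p)
    (s : ℝ) : ℝ :=
  (μ (A ∩ {v | v k ≤ s})).toReal / (μ A).toReal

/-!
Split `A` at `(j, b)` into cells `L`, `R` with masses `q_L`, `q_R` and integrals `I_L`, `I_R` of
`f*`. Since `q Var` over a cell is `∫ f*² - (∫ f*)² / q`, the impurity decrease is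
`I_L²/q_L + I_R²/q_R - (I_L + I_R)²/P(A)`, and this turns into the identity
`|∫_R (f* - m_A)| = √Δ · √P(A) · √(q(1 - q))` with `m_A` the conditional mean and `q = q_L / P(A)`.
By additivity, `P(A) Var(f* | A) = ∑_k ∫_A (f* - m_A)(f_k(x_k) - f_k(ℓ_k))`; writing
`f_k(x_k) - f_k(ℓ_k) = ∫_{ℓ_k}^{x_k} f_k'` and using Fubini, the `k`-th summand is
`∫_{ℓ_k}^{u_k} (∫_{A ∩ {x_k > t}} (f* - m_A)) f_k'(t) dt`. Bounding the inner integral by the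
identity with `√Δ ≤ sup √Δ` gives `P(A) Var ≤ √P(A) · sup √Δ · ∑_k ∫ √(q(1 - q)) |f_k'|`.
-/

section CondVar

variable {p : ℕ} {μ : Measure (Fin p → ℝ)} {g : (Fin p → ℝ) → ℝ} {B : Set (Fin p → ℝ)}

theorem condVar_nonneg : 0 ≤ condVar μ g B :=
  div_nonneg (integral_nonneg fun _ => sq_nonneg _) ENNReal.toReal_nonneg

variable [IsFiniteMeasure μ]

theorem setIntegral_eq_zero_of_measure_toReal_eq_zero (h : (μ B).toReal = 0)
    (φ : (Fin p → ℝ) → ℝ) : ∫ x in B, φ x ∂μ = 0 :=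
  setIntegral_measure_zero φ ((measureReal_eq_zero_iff).1 h)

theorem setIntegral_sub_condMean (hg : IntegrableOn g B μ) :
    ∫ x in B, (g x - condMean μ g B) ∂μ = 0 := by
  rw [integral_sub hg (integrableOn_const (measure_ne_top _ _)), setIntegral_const,
    measureReal_def, smul_eq_mul, condMean]
  rcases eq_or_ne (μ B).toReal 0 with h | h
  · simp [h, setIntegral_eq_zero_of_measure_toReal_eq_zero h]
  · field_simp
    ring

theorem measure_mul_condVar_eq_setIntegral_mul (hg : IntegrableOn g B μ)
    (hg2 : IntegrableOn (fun x => g x ^ 2) B μ) (c : ℝ) :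
    (μ B).toReal * condVar μ g B = ∫ x in B, (g x - condMean μ g B) * (g x - c) ∂μ := by
  set a := condMean μ g B
  rcases eq_or_ne (μ B).toReal 0 with h | h
  · simp [h, setIntegral_eq_zero_of_measure_toReal_eq_zero h]
  have hga : IntegrableOn (fun x => g x - a) B μ := hg.sub (integrableOn_const (measure_ne_top _ _))
  have hprod : IntegrableOn (fun x => (g x - a) * (g x - c)) B μ := by
    have hexp : (fun x => (g x - a) * (g x - c)) = fun x => g x ^ 2 - (a + c) * g x + a * c := by
      ext x; ring
    rw [hexp]
    exact (hg2.sub (hg.const_mul _)).add (integrableOn_const (measure_ne_top _ _))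
  calc (μ B).toReal * condVar μ g B = ∫ x in B, (g x - a) ^ 2 ∂μ := by
        rw [condVar, mul_div_cancel₀ _ h]
    _ = ∫ x in B, ((g x - a) * (g x - c) + (c - a) * (g x - a)) ∂μ := by
        congr 1; ext x; ring
    _ = ∫ x in B, (g x - a) * (g x - c) ∂μ := by
        rw [integral_add hprod (hga.const_mul _), integral_const_mul, setIntegral_sub_condMean hg,
          mul_zero, add_zero]

theorem measure_mul_condVar_eq_sub (hg : IntegrableOn g B μ)
    (hg2 : IntegrableOn (fun x => g x ^ 2) B μ) :
    (μ B).toReal * condVar μ g B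
      = ∫ x in B, g x ^ 2 ∂μ - (∫ x in B, g x ∂μ) ^ 2 / (μ B).toReal := by
  rw [measure_mul_condVar_eq_setIntegral_mul hg hg2 0]
  simp only [sub_zero, sub_mul, ← pow_two]
  rw [integral_sub hg2 (hg.const_mul _), integral_const_mul, condMean]
  ring

theorem measure_mul_condVar_eq_sum_setIntegral {ι : Type*} {s : Finset ι}
    {G : ι → (Fin p → ℝ) → ℝ} {c : ℝ} (hB : MeasurableSet B) (hg : IntegrableOn g B μ)
    (hg2 : IntegrableOn (fun x => g x ^ 2) B μ) (hG : ∀ x ∈ B, g x - c = ∑ i ∈ s, G i x)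
    (hGint : ∀ i ∈ s, IntegrableOn (fun x => (g x - condMean μ g B) * G i x) B μ) :
    (μ B).toReal * condVar μ g B = ∑ i ∈ s, ∫ x in B, (g x - condMean μ g B) * G i x ∂μ := by
  rw [measure_mul_condVar_eq_setIntegral_mul hg hg2 c, ← integral_finsetSum s hGint]
  exact setIntegral_congr_fun hB fun x hx => by rw [hG x hx, Finset.mul_sum]

end CondVar

-- `S`, `R` are the integrals over the two cells of a split and `a`, `b` their masses; the
-- degenerate cells need `x / 0 = 0`.
theorem sq_sub_div_mul_eq {S R a b : ℝ} (ha : 0 ≤ a) (hb : 0 ≤ b) (hS : a = 0 → S = 0)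
    (hR : b = 0 → R = 0) :
    (R - (S + R) / (a + b) * b) ^ 2
      = (S ^ 2 / a + R ^ 2 / b - (S + R) ^ 2 / (a + b))
        * ((a + b) * (a / (a + b) * (1 - a / (a + b)))) := by
  rcases ha.eq_or_lt with rfl | ha
  · rcases hb.eq_or_lt with rfl | hb
    · simp [hS rfl, hR rfl]
    · simp [hS rfl, hb.ne']
  rcases hb.eq_or_lt with rfl | hb
  · simp [hR rfl]
  field_simp
  ring

section Split

variable {p : ℕ} {μ : Measure (Fin p → ℝ)} {g : (Fin p → ℝ) → ℝ} {A : Set (Fin p → ℝ)}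
  {j : Fin p} {b : ℝ}

theorem cellL_union_cellR : cellL A j b ∪ cellR A j b = A := by
  ext v
  simp only [cellL, cellR, Set.mem_union, Set.mem_inter_iff, Set.mem_ofPred_eq, ← and_or_left]
  exact and_iff_left (le_or_gt _ _)

theorem disjoint_cellL_cellR : Disjoint (cellL A j b) (cellR A j b) :=
  Set.disjoint_left.2 fun v (hL : v ∈ A ∧ v j ≤ b) (hR : v ∈ A ∧ b < v j) => hR.2.not_ge hL.2

theorem measurableSet_cellR (hA : MeasurableSet A) : MeasurableSet (cellR A j b) :=
  hA.inter (measurableSet_lt measurable_const (measurable_pi_apply j))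

theorem setIntegral_cellL_add_cellR (hA : MeasurableSet A) {φ : (Fin p → ℝ) → ℝ}
    (hφ : IntegrableOn φ A μ) :
    ∫ x in cellL A j b, φ x ∂μ + ∫ x in cellR A j b, φ x ∂μ = ∫ x in A, φ x ∂μ := by
  rw [← setIntegral_union disjoint_cellL_cellR (measurableSet_cellR hA)
    (hφ.mono_set Set.inter_subset_left) (hφ.mono_set Set.inter_subset_left), cellL_union_cellR]

variable [IsFiniteMeasure μ]

theorem measure_toReal_cellL_add_cellR (hA : MeasurableSet A) :
    (μ (cellL A j b)).toReal + (μ (cellR A j b)).toReal = (μ A).toReal := by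
  simp only [← measureReal_def]
  rw [← measureReal_union disjoint_cellL_cellR (measurableSet_cellR hA), cellL_union_cellR]

theorem impurity_eq (hA : MeasurableSet A) (hg : IntegrableOn g A μ)
    (hg2 : IntegrableOn (fun x => g x ^ 2) A μ) :
    impurity μ g A j b
      = (∫ x in cellL A j b, g x ∂μ) ^ 2 / (μ (cellL A j b)).toReal
        + (∫ x in cellR A j b, g x ∂μ) ^ 2 / (μ (cellR A j b)).toReal
        - (∫ x in A, g x ∂μ) ^ 2 / (μ A).toReal := by
  have hL : cellL A j b ⊆ A := Set.inter_subset_left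
  have hR : cellR A j b ⊆ A := Set.inter_subset_left
  rw [impurity, measure_mul_condVar_eq_sub hg hg2,
    measure_mul_condVar_eq_sub (hg.mono_set hL) (hg2.mono_set hL),
    measure_mul_condVar_eq_sub (hg.mono_set hR) (hg2.mono_set hR),
    ← setIntegral_cellL_add_cellR (j := j) (b := b) hA hg2]
  ring

theorem sq_setIntegral_cellR_sub_condMean (hA : MeasurableSet A) (hg : IntegrableOn g A μ)
    (hg2 : IntegrableOn (fun x => g x ^ 2) A μ) :
    (∫ x in cellR A j b, (g x - condMean μ g A) ∂μ) ^ 2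
      = impurity μ g A j b
        * ((μ A).toReal * (condCDFCoord μ A j b * (1 - condCDFCoord μ A j b))) := by
  have hR : cellR A j b ⊆ A := Set.inter_subset_left
  have hvanish {C : Set (Fin p → ℝ)} (hC : (μ C).toReal = 0) : ∫ x in C, g x ∂μ = 0 :=
    setIntegral_eq_zero_of_measure_toReal_eq_zero hC g
  rw [integral_sub (hg.mono_set hR) (integrableOn_const (measure_ne_top _ _)), setIntegral_const,
    measureReal_def, smul_eq_mul, impurity_eq hA hg hg2, condMean, condCDFCoord,
    ← setIntegral_cellL_add_cellR (j := j) (b := b) hA hg,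
    ← measure_toReal_cellL_add_cellR (μ := μ) (j := j) (b := b) hA, mul_comm]
  exact sq_sub_div_mul_eq ENNReal.toReal_nonneg ENNReal.toReal_nonneg hvanish hvanish

end Split

section CondCDF

variable {p : ℕ} {μ : Measure (Fin p → ℝ)} {A : Set (Fin p → ℝ)} {k : Fin p}

theorem condCDFCoord_nonneg (s : ℝ) : 0 ≤ condCDFCoord μ A k s :=
  div_nonneg ENNReal.toReal_nonneg ENNReal.toReal_nonneg

variable [IsFiniteMeasure μ]

theorem condCDFCoord_le_one (s : ℝ) : condCDFCoord μ A k s ≤ 1 :=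
  div_le_one_of_le₀ (ENNReal.toReal_mono (measure_ne_top μ A) (measure_mono Set.inter_subset_left))
    ENNReal.toReal_nonneg

theorem monotone_condCDFCoord : Monotone (condCDFCoord μ A k) := fun _ _ hst =>
  div_le_div_of_nonneg_right (ENNReal.toReal_mono (measure_ne_top _ _)
    (measure_mono (Set.inter_subset_inter_right A fun _ hv => le_trans hv hst)))
    ENNReal.toReal_nonneg

theorem sqrt_condCDFCoord_mul_one_sub_le_one (s : ℝ) :
    √(condCDFCoord μ A k s * (1 - condCDFCoord μ A k s)) ≤ 1 :=
  Real.sqrt_le_one.2 <| by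
    have h0 := condCDFCoord_nonneg (μ := μ) (A := A) (k := k) s
    have h1 := condCDFCoord_le_one (μ := μ) (A := A) (k := k) s
    nlinarith

theorem integrableOn_sqrt_condCDFCoord_mul {F' : ℝ → ℝ} {s : Set ℝ} (hF' : IntegrableOn F' s) :
    IntegrableOn (fun t => √(condCDFCoord μ A k t * (1 - condCDFCoord μ A k t)) * |F' t|) s := by
  have hq : Measurable (condCDFCoord μ A k) := monotone_condCDFCoord.measurable
  refine hF'.abs.bdd_mul (c := 1) ?_ (ae_of_all _ fun t => ?_)
  · exact (hq.mul (measurable_const.sub hq)).sqrt.aestronglyMeasurable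
  · rw [Real.norm_of_nonneg (Real.sqrt_nonneg _)]
    exact sqrt_condCDFCoord_mul_one_sub_le_one t

theorem abs_setIntegral_cellR_sub_condMean {g : (Fin p → ℝ) → ℝ} (hA : MeasurableSet A)
    (hg : IntegrableOn g A μ) (hg2 : IntegrableOn (fun x => g x ^ 2) A μ) (b : ℝ) :
    |∫ x in cellR A k b, (g x - condMean μ g A) ∂μ|
      = √(impurity μ g A k b) * √(μ A).toReal
        * √(condCDFCoord μ A k b * (1 - condCDFCoord μ A k b)) := by
  have hq := mul_nonneg (condCDFCoord_nonneg (μ := μ) (A := A) (k := k) b)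
    (sub_nonneg.2 (condCDFCoord_le_one (μ := μ) (A := A) (k := k) b))
  rw [← Real.sqrt_sq_eq_abs, sq_setIntegral_cellR_sub_condMean hA hg hg2,
    Real.sqrt_mul' _ (mul_nonneg ENNReal.toReal_nonneg hq), Real.sqrt_mul ENNReal.toReal_nonneg,
    mul_assoc]

end CondCDF

theorem integral_eq_sub_of_hasDerivWithinAt_Icc {F F' : ℝ → ℝ} {a b : ℝ} (hab : a ≤ b)
    (hF : ∀ s ∈ Set.Icc a b, HasDerivWithinAt F (F' s) (Set.Icc a b) s)
    (hF' : IntegrableOn F' (Set.Icc a b)) :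
    ∫ t in a..b, F' t = F b - F a :=
  intervalIntegral.integral_eq_sub_of_hasDerivAt_of_le hab
    (fun s hs => (hF s hs).continuousWithinAt)
    (fun s hs => (hF s (Set.Ioo_subset_Icc_self hs)).hasDerivAt (Icc_mem_nhds hs.1 hs.2))
    ((intervalIntegrable_iff_integrableOn_Icc_of_le hab).2 hF')

/-- Fubini's theorem applied to `F (φ x) - F a = ∫ t in Ioc a b, 1_{t < φ x} * F' t`. -/
theorem integral_mul_sub_eq_setIntegral_Ioc {α : Type*} [MeasurableSpace α] {ρ : Measure α}
    [SFinite ρ] {h φ : α → ℝ} {F F' : ℝ → ℝ} {a b : ℝ} (hh : Integrable h ρ) (hφ : Measurable φ)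
    (hφab : ∀ᵐ x ∂ρ, φ x ∈ Set.Icc a b)
    (hF : ∀ s ∈ Set.Icc a b, HasDerivWithinAt F (F' s) (Set.Icc a b) s)
    (hF' : IntegrableOn F' (Set.Icc a b)) :
    ∫ x, h x * (F (φ x) - F a) ∂ρ = ∫ t in Set.Ioc a b, (∫ x in {x | t < φ x}, h x ∂ρ) * F' t := by
  set S := {z : α × ℝ | z.2 < φ z.1}
  have hS : MeasurableSet S := measurableSet_lt measurable_snd (hφ.comp measurable_fst)
  have hH : Integrable (S.indicator fun z => h z.1 * F' z.2)
      (ρ.prod (volume.restrict (Set.Ioc a b))) :=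
    (hh.mul_prod (hF'.mono_set Set.Ioc_subset_Icc_self)).indicator hS
  convert integral_integral_swap (f := fun x t => S.indicator (fun z => h z.1 * F' z.2) (x, t)) hH
    using 1
  · refine integral_congr_ae (hφab.mono fun x hx => ?_)
    have hFTC : ∫ t in a..φ x, F' t = F (φ x) - F a :=
      integral_eq_sub_of_hasDerivWithinAt_Icc hx.1
        (fun s hs => (hF s ⟨hs.1, hs.2.trans hx.2⟩).mono (Set.Icc_subset_Icc_right hx.2))
        (hF'.mono_set (Set.Icc_subset_Icc_right hx.2))
    have hset : Set.Ioc a b ∩ Set.Iio (φ x) = Set.Ioo a (φ x) := by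
      ext t
      simp only [Set.mem_inter_iff, Set.mem_Ioc, Set.mem_Iio, Set.mem_Ioo]
      grind
    calc h x * (F (φ x) - F a) = ∫ t in Set.Ioc a (φ x), h x * F' t := by
          rw [← hFTC, ← intervalIntegral.integral_const_mul, intervalIntegral.integral_of_le hx.1]
      _ = ∫ t in Set.Ioc a b, (Set.Iio (φ x)).indicator (fun t => h x * F' t) t := by
          rw [setIntegral_indicator measurableSet_Iio, hset, integral_Ioc_eq_integral_Ioo]
      _ = _ := rfl
  · refine congrArg _ (funext fun t => ?_)
    calc (∫ x in {x | t < φ x}, h x ∂ρ) * F' t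
        = ∫ x, {x | t < φ x}.indicator (fun x => h x * F' t) x ∂ρ := by
          rw [integral_indicator (measurableSet_lt measurable_const hφ), integral_mul_const]
      _ = _ := rfl

theorem setIntegral_mul_sub_le {p : ℕ} {μ : Measure (Fin p → ℝ)} [IsFiniteMeasure μ]
    {g : (Fin p → ℝ) → ℝ} {A : Set (Fin p → ℝ)} {k : Fin p} {a b D : ℝ} {F F' : ℝ → ℝ}
    (hA : MeasurableSet A) (hg : IntegrableOn g A μ) (hg2 : IntegrableOn (fun x => g x ^ 2) A μ)
    (hab : a ≤ b) (hAk : ∀ x ∈ A, x k ∈ Set.Icc a b)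
    (hF : ∀ s ∈ Set.Icc a b, HasDerivWithinAt F (F' s) (Set.Icc a b) s)
    (hF' : IntegrableOn F' (Set.Icc a b)) (hD : ∀ t, √(impurity μ g A k t) ≤ D) :
    ∫ x in A, (g x - condMean μ g A) * (F (x k) - F a) ∂μ
      ≤ D * √(μ A).toReal
        * ∫ t in a..b, √(condCDFCoord μ A k t * (1 - condCDFCoord μ A k t)) * |F' t| := by
  set c := condMean μ g A
  set w := fun t => √(condCDFCoord μ A k t * (1 - condCDFCoord μ A k t))
  have hcell (t : ℝ) : ∫ x in {x | t < x k}, (g x - c) ∂μ.restrict A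
      = ∫ x in cellR A k t, (g x - c) ∂μ := by
    rw [Measure.restrict_restrict (measurableSet_lt measurable_const (measurable_pi_apply k)),
      Set.inter_comm]
    rfl
  have hpt (t : ℝ) :
      |∫ x in cellR A k t, (g x - c) ∂μ| * |F' t| ≤ D * √(μ A).toReal * (w t * |F' t|) :=
    calc |∫ x in cellR A k t, (g x - c) ∂μ| * |F' t|
        = √(impurity μ g A k t) * √(μ A).toReal * w t * |F' t| := by
          rw [abs_setIntegral_cellR_sub_condMean hA hg hg2]
      _ ≤ D * √(μ A).toReal * w t * |F' t| := by gcongr; exact hD t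
      _ = D * √(μ A).toReal * (w t * |F' t|) := by ring
  have hF'Ioc := hF'.mono_set Set.Ioc_subset_Icc_self
  have hgc : IntegrableOn (fun x => g x - c) A μ := hg.sub (integrableOn_const (measure_ne_top _ _))
  calc ∫ x in A, (g x - c) * (F (x k) - F a) ∂μ
      = ∫ t in Set.Ioc a b, (∫ x in cellR A k t, (g x - c) ∂μ) * F' t := by
        rw [integral_mul_sub_eq_setIntegral_Ioc hgc (measurable_pi_apply k)
          (ae_restrict_of_forall_mem hA hAk) hF hF']
        simp_rw [hcell]
    _ ≤ ∫ t in Set.Ioc a b, |∫ x in cellR A k t, (g x - c) ∂μ| * |F' t| :=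
        (le_abs_self _).trans (by simpa only [Real.norm_eq_abs, abs_mul] using
          norm_integral_le_integral_norm fun t => (∫ x in cellR A k t, (g x - c) ∂μ) * F' t)
    _ ≤ ∫ t in Set.Ioc a b, D * √(μ A).toReal * (w t * |F' t|) :=
        integral_mono_of_nonneg (ae_of_all _ fun t => by positivity)
          ((integrableOn_sqrt_condCDFCoord_mul hF'Ioc).const_mul _) (ae_of_all _ hpt)
    _ = D * √(μ A).toReal * ∫ t in a..b, w t * |F' t| := by
        rw [integral_const_mul, intervalIntegral.integral_of_le hab]

section Impurity

variable {p : ℕ} {μ : Measure (Fin p → ℝ)} {g : (Fin p → ℝ) → ℝ} {A : Set (Fin p → ℝ)}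

theorem impurity_le_measure_mul_condVar (j : Fin p) (b : ℝ) :
    impurity μ g A j b ≤ (μ A).toReal * condVar μ g A := by
  have hL : 0 ≤ (μ (cellL A j b)).toReal * condVar μ g (cellL A j b) :=
    mul_nonneg ENNReal.toReal_nonneg condVar_nonneg
  have hR : 0 ≤ (μ (cellR A j b)).toReal * condVar μ g (cellR A j b) :=
    mul_nonneg ENNReal.toReal_nonneg condVar_nonneg
  rw [impurity]
  linarith

theorem sqrt_impurity_le_iSup (j : Fin p) (b : ℝ) :
    √(impurity μ g A j b) ≤ ⨆ j, ⨆ b, √(impurity μ g A j b) := by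
  have hbdd (j : Fin p) : BddAbove (Set.range fun b => √(impurity μ g A j b)) :=
    ⟨√((μ A).toReal * condVar μ g A), Set.forall_mem_range.2 fun b =>
      Real.sqrt_le_sqrt (impurity_le_measure_mul_condVar j b)⟩
  exact le_ciSup_of_le (Set.finite_range _).bddAbove j (le_ciSup (hbdd j) b)

end Impurity

theorem sqrt_measure_mul_condVar_le_of_additive {p : ℕ} {μ : Measure (Fin p → ℝ)}
    [IsFiniteMeasure μ] {g : (Fin p → ℝ) → ℝ} {f f' : Fin p → ℝ → ℝ} {ℓ u : Fin p → ℝ} {D : ℝ}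
    (hlu : ∀ k, ℓ k ≤ u k)
    (hF : ∀ k, ∀ s ∈ Set.Icc (ℓ k) (u k), HasDerivWithinAt (f k) (f' k s) (Set.Icc (ℓ k) (u k)) s)
    (hF' : ∀ k, IntegrableOn (f' k) (Set.Icc (ℓ k) (u k)))
    (hadd : ∀ x ∈ rect ℓ u, g x = ∑ k, f k (x k)) (hD0 : 0 ≤ D)
    (hD : ∀ k t, √(impurity μ g (rect ℓ u) k t) ≤ D) :
    √(μ (rect ℓ u)).toReal * condVar μ g (rect ℓ u)
      ≤ D * ∑ k, ∫ s in ℓ k..u k,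
        √(condCDFCoord μ (rect ℓ u) k s * (1 - condCDFCoord μ (rect ℓ u) k s)) * |f' k s| := by
  set A := rect ℓ u
  set K := ∑ k, ∫ s in ℓ k..u k, √(condCDFCoord μ A k s * (1 - condCDFCoord μ A k s)) * |f' k s|
  have hA : MeasurableSet A := MeasurableSet.univ_pi fun _ => measurableSet_Icc
  have hAc : IsCompact A := isCompact_univ_pi fun _ => isCompact_Icc
  have hAk (k : Fin p) : ∀ x ∈ A, x k ∈ Set.Icc (ℓ k) (u k) := fun x hx => hx k (Set.mem_univ k)
  have hfk (k : Fin p) : ContinuousOn (fun x : Fin p → ℝ => f k (x k)) A :=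
    ContinuousOn.comp (fun s hs => (hF k s hs).continuousWithinAt)
      (continuous_apply k).continuousOn (hAk k)
  have hgc : ContinuousOn g A := (continuousOn_finsetSum _ fun k _ => hfk k).congr hadd
  have hg := hgc.integrableOn_compact (μ := μ) hAc
  have hg2 := (hgc.pow 2).integrableOn_compact (μ := μ) hAc
  rcases ENNReal.toReal_nonneg.eq_or_lt with hm | hm
  · rw [← hm, Real.sqrt_zero, zero_mul]
    exact mul_nonneg hD0 (Finset.sum_nonneg fun k _ =>
      intervalIntegral.integral_nonneg (hlu k) fun t _ => by positivity)
  have hvar : (μ A).toReal * condVar μ g A ≤ √(μ A).toReal * (D * K) :=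
    calc (μ A).toReal * condVar μ g A
        = ∑ k, ∫ x in A, (g x - condMean μ g A) * (f k (x k) - f k (ℓ k)) ∂μ :=
          measure_mul_condVar_eq_sum_setIntegral hA hg hg2
            (fun x hx => by rw [hadd x hx, Finset.sum_sub_distrib])
            (fun k _ => ((hgc.sub continuousOn_const).mul
              ((hfk k).sub continuousOn_const)).integrableOn_compact hAc)
      _ ≤ ∑ k, D * √(μ A).toReal * ∫ s in ℓ k..u k,
            √(condCDFCoord μ A k s * (1 - condCDFCoord μ A k s)) * |f' k s| :=
          Finset.sum_le_sum fun k _ =>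
            setIntegral_mul_sub_le hA hg hg2 (hlu k) (hAk k) (hF k) (hF' k) (hD k)
      _ = √(μ A).toReal * (D * K) := by rw [← Finset.mul_sum]; ring
  refine le_of_mul_le_mul_left ?_ (Real.sqrt_pos.2 hm)
  rwa [← mul_assoc, Real.mul_self_sqrt hm.le]

theorem best_split_lower_bound_general
    (p : ℕ)
    (μ : Measure (Fin p → ℝ)) [IsProbabilityMeasure μ]
    (f : Fin p → ℝ → ℝ) (f' : Fin p → ℝ → ℝ)
    (hderiv : ∀ k, ∀ s ∈ Set.Icc (0 : ℝ) 1, HasDerivWithinAt (f k) (f' k s) (Set.Icc (0 : ℝ) 1) s)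
    (hint : ∀ k, IntegrableOn (f' k) (Set.Icc (0 : ℝ) 1) volume)
    (fstar : (Fin p → ℝ) → ℝ)
    (hadd : ∀ u, fstar u = ∑ k, f k (u k))
    (ℓ u : Fin p → ℝ) (hl : ∀ j, 0 ≤ ℓ j) (hlu : ∀ j, ℓ j < u j) (hu : ∀ j, u j ≤ 1) :
    (⨆ j : Fin p, ⨆ b : ℝ, Real.sqrt (impurity μ fstar (rect ℓ u) j b)) *
        (∑ k : Fin p, ∫ s in ℓ k..u k,
          Real.sqrt (condCDFCoord μ (rect ℓ u) k s * (1 - condCDFCoord μ (rect ℓ u) k s)) *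
            |f' k s|)
      ≥ Real.sqrt (μ (rect ℓ u)).toReal * condVar μ fstar (rect ℓ u) := by
  have hsub (k : Fin p) : Set.Icc (ℓ k) (u k) ⊆ Set.Icc 0 1 := Set.Icc_subset_Icc (hl k) (hu k)
  exact sqrt_measure_mul_condVar_le_of_additive (fun k => (hlu k).le)
    (fun k s hs => (hderiv k s (hsub k hs)).mono (hsub k)) (fun k => (hint k).mono_set (hsub k))
    (fun x _ => hadd x) (Real.iSup_nonneg fun j => Real.iSup_nonneg fun b => Real.sqrt_nonneg _)
    sqrt_impurity_le_iSup

/-- **Lemma (lower bound on the best split in terms of weighted total variation).**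
For an additive signal `f*(u) = ∑ f_k(u_k)` with differentiable components, and any
nondegenerate closed rectangle `A = ∏[ℓ_j,u_j] ⊆ [0,1]^p`,
`(sup_{j,b} √Δ(A,j,b)) · ∑_k ∫ √(q_A^{(k)}(1−q_A^{(k)})) |f_k'| ≥ √P(X∈A) · Var(f*(X)|X∈A)`. -/
theorem best_split_lower_bound
    (p : ℕ) (hp : 1 ≤ p)
    (μ : Measure (Fin p → ℝ)) [IsProbabilityMeasure μ]
    (pX : (Fin p → ℝ) → ℝ) (θlo θhi : ℝ)
    (hθlo : 0 < θlo) (hθhi : θlo ≤ θhi)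
    (hdens : μ = (volume.restrict (box p)).withDensity fun u => ENNReal.ofReal (pX u))
    (hbound : ∀ u ∈ box p, θlo ≤ pX u ∧ pX u ≤ θhi)
    (f : Fin p → ℝ → ℝ) (f' : Fin p → ℝ → ℝ)
    (hderiv : ∀ k, ∀ s ∈ Set.Icc (0 : ℝ) 1, HasDerivWithinAt (f k) (f' k s) (Set.Icc (0 : ℝ) 1) s)
    (hint : ∀ k, IntegrableOn (f' k) (Set.Icc (0 : ℝ) 1) volume)
    (fstar : (Fin p → ℝ) → ℝ)
    (hadd : ∀ u, fstar u = ∑ k, f k (u k))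
    (ℓ u : Fin p → ℝ) (hl : ∀ j, 0 ≤ ℓ j) (hlu : ∀ j, ℓ j < u j) (hu : ∀ j, u j ≤ 1) :
    (⨆ j : Fin p, ⨆ b : ℝ, Real.sqrt (impurity μ fstar (rect ℓ u) j b)) *
        (∑ k : Fin p, ∫ s in ℓ k..u k,
          Real.sqrt (condCDFCoord μ (rect ℓ u) k s * (1 - condCDFCoord μ (rect ℓ u) k s)) *
            |f' k s|)
      ≥ Real.sqrt (μ (rect ℓ u)).toReal * condVar μ fstar (rect ℓ u) :=
  best_split_lower_bound_general p μ f f' hderiv hint fstar hadd ℓ u hl hlu hu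
end
end

section
/- Let p ≥ 1 and let μ be a probability measure on [0,1]^p having a density p_X with respect to Lebesgue measure with 0 < θ̲ ≤ p_X(u) ≤ θ̄ < ∞ for all u ∈ [0,1]^p; let X ~ μ. Suppose f*(u) = f*_1(u_1) + ⋯ + f*_p(u_p) with each f*_k square-integrable on [0,1]. Then for any rectangle A = ∏_{j=1}^p [ℓ_j, u_j] ⊆ [0,1]^p with ℓ_j < u_j for all j, Var(f*(X) | X ∈ A) ≥ (θ̲/θ̄) · ∑_{j=1}^p (u_j − ℓ_j)^{−1} ∫_{ℓ_j}^{u_j} (f*_j(t) − c_j)² dt, where c_j := (u_j − ℓ_j)^{−1} ∫_{ℓ_j}^{u_j} f*_j(t) dt. -/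
open MeasureTheory Set Filter
open scoped ENNReal Classical

noncomputable section

/-! On the rectangle `A` with volume `V`, the density bounds sandwich `μ` restricted to `A`
between `θlo V • P` and `θhi V • P`, where `P` is the uniform distribution on `A`. Hence the
conditional second moment of `f*` about any centre, in particular about its conditional mean, is
at least `θlo V / (θhi V)` times `Var_P f*`. Under `P` the coordinates are independent and uniform
on `[ℓ_j, u_j]`, so `Var_P f*` is the sum of the variances of the `f_j` there, which are the terms
of the bound. -/

open ProbabilityTheory

section

variable {α : Type*} [MeasurableSpace α]

theorem variance_le_integral_sub_sq {P : Measure α} [IsProbabilityMeasure P] {X : α → ℝ}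
    (hX : AEStronglyMeasurable X P) (c : ℝ) : Var[X; P] ≤ ∫ x, (X x - c) ^ 2 ∂P := by
  rw [← variance_sub_const hX c]
  exact variance_le_expectation_sq (hX.sub aestronglyMeasurable_const)

theorem div_mul_variance_le_integral_sub_sq_div {μ P : Measure α} [IsProbabilityMeasure P]
    {κlo κhi : ℝ} (hκlo : 0 < κlo) (hlo : ENNReal.ofReal κlo • P ≤ μ)
    (hhi : μ ≤ ENNReal.ofReal κhi • P) {X : α → ℝ} (hX : MemLp X 2 P) (m : ℝ) :
    κlo / κhi * Var[X; P] ≤ (∫ x, (X x - m) ^ 2 ∂μ) / (μ univ).toReal := by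
  have hμlo : ENNReal.ofReal κlo ≤ μ univ := by simpa using hlo univ
  have hμhi : μ univ ≤ ENNReal.ofReal κhi := by simpa using hhi univ
  have hμ_pos : 0 < (μ univ).toReal :=
    ENNReal.toReal_pos ((ENNReal.ofReal_pos.2 hκlo).trans_le hμlo).ne'
      (hμhi.trans_lt ENNReal.ofReal_lt_top).ne
  have hκ : κlo ≤ κhi :=
    (ENNReal.ofReal_le_ofReal_iff'.1 (hμlo.trans hμhi)).resolve_right hκlo.not_ge
  have hμ_le : (μ univ).toReal ≤ κhi :=
    ENNReal.toReal_le_of_le_ofReal (hκlo.le.trans hκ) hμhi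
  have hsq : Integrable (fun x => (X x - m) ^ 2) P := (hX.sub (memLp_const m)).integrable_sq
  have hnum : κlo * Var[X; P] ≤ ∫ x, (X x - m) ^ 2 ∂μ :=
    calc κlo * Var[X; P] ≤ κlo * ∫ x, (X x - m) ^ 2 ∂P :=
          mul_le_mul_of_nonneg_left (variance_le_integral_sub_sq hX.1 m) hκlo.le
      _ = ∫ x, (X x - m) ^ 2 ∂(ENNReal.ofReal κlo • P) := by
          rw [integral_smul_measure, ENNReal.toReal_ofReal hκlo.le, smul_eq_mul]
      _ ≤ ∫ x, (X x - m) ^ 2 ∂μ :=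
          integral_mono_measure hlo (ae_of_all _ fun x => sq_nonneg _)
            ((hsq.smul_measure ENNReal.ofReal_ne_top).mono_measure hhi)
  rw [div_mul_eq_mul_div]
  exact div_le_div₀ (integral_nonneg fun x => sq_nonneg _) hnum hμ_pos hμ_le

theorem smul_restrict_le_restrict_withDensity {ν : Measure α} {ρ : α → ℝ} {A : Set α}
    {θ : ℝ} (hA : MeasurableSet A) (hρ : ∀ x ∈ A, θ ≤ ρ x) :
    ENNReal.ofReal θ • ν.restrict A ≤
      (ν.withDensity fun x => ENNReal.ofReal (ρ x)).restrict A := by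
  rw [restrict_withDensity hA, ← withDensity_const]
  exact withDensity_mono ((ae_restrict_iff' hA).2 (ae_of_all _ fun x hx =>
    ENNReal.ofReal_le_ofReal (hρ x hx)))

theorem restrict_withDensity_le_smul_restrict {ν : Measure α} {ρ : α → ℝ} {A : Set α}
    {θ : ℝ} (hA : MeasurableSet A) (hρ : ∀ x ∈ A, ρ x ≤ θ) :
    (ν.withDensity fun x => ENNReal.ofReal (ρ x)).restrict A ≤
      ENNReal.ofReal θ • ν.restrict A := by
  rw [restrict_withDensity hA, ← withDensity_const]
  exact withDensity_mono ((ae_restrict_iff' hA).2 (ae_of_all _ fun x hx =>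
    ENNReal.ofReal_le_ofReal (hρ x hx)))

theorem MeasureTheory.MemLp.cond_of_subset {μ : Measure α} {s t : Set α} {f : α → ℝ}
    {q : ℝ≥0∞} (hf : MemLp f q (μ.restrict t)) (hst : s ⊆ t) (hs : μ s ≠ 0) :
    MemLp f q μ[|s] :=
  (hf.mono_measure (Measure.restrict_mono hst le_rfl)).smul_measure (ENNReal.inv_ne_top.2 hs)

end

theorem MeasureTheory.Measure.restrict_pi_pi_eq_smul_pi_cond {ι : Type*} [Fintype ι]
    {β : ι → Type*} [∀ i, MeasurableSpace (β i)] (μ : ∀ i, Measure (β i))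
    [∀ i, SigmaFinite (μ i)]
    (s : ∀ i, Set (β i)) (hs₀ : ∀ i, μ i (s i) ≠ 0) (hs : ∀ i, μ i (s i) ≠ ∞) :
    (Measure.pi μ).restrict (univ.pi s) =
      (∏ i, μ i (s i)) • Measure.pi fun i => (μ i)[|s i] := by
  rw [Measure.restrict_pi_pi]
  refine Measure.pi_eq fun t ht => ?_
  rw [Measure.smul_apply, Measure.pi_pi, smul_eq_mul, ← Finset.prod_mul_distrib]
  refine Finset.prod_congr rfl fun i _ => ?_
  rw [ProbabilityTheory.cond, Measure.smul_apply, smul_eq_mul, ← mul_assoc,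
    ENNReal.mul_inv_cancel (hs₀ i) (hs i), one_mul]

theorem isProbabilityMeasure_cond_Icc {a b : ℝ} (hab : a < b) :
    IsProbabilityMeasure volume[|Icc a b] :=
  cond_isProbabilityMeasure_of_finite (by simp [hab]) measure_Icc_lt_top.ne

theorem integral_cond_Icc {a b : ℝ} (hab : a ≤ b) (g : ℝ → ℝ) :
    ∫ x, g x ∂volume[|Icc a b] = (b - a)⁻¹ * ∫ x in a..b, g x := by
  rw [ProbabilityTheory.cond, integral_smul_measure, intervalIntegral.integral_of_le hab,
    ← integral_Icc_eq_integral_Ioc, ENNReal.toReal_inv, Real.volume_Icc,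
    ENNReal.toReal_ofReal (sub_nonneg.2 hab), smul_eq_mul]

theorem variance_cond_Icc {a b : ℝ} (hab : a ≤ b) {f : ℝ → ℝ}
    (hf : AEMeasurable f volume[|Icc a b]) :
    Var[f; volume[|Icc a b]] =
      (b - a)⁻¹ * ∫ s in a..b, (f s - (b - a)⁻¹ * ∫ t in a..b, f t) ^ 2 := by
  rw [variance_eq_integral hf, integral_cond_Icc hab, integral_cond_Icc hab]

theorem volume_restrict_pi_Icc_eq_smul_pi_cond {ι : Type*} [Fintype ι] {a b : ι → ℝ}
    (hab : ∀ i, a i < b i) :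
    volume.restrict (univ.pi fun i => Icc (a i) (b i)) =
      ENNReal.ofReal (∏ i, (b i - a i)) • Measure.pi fun i => volume[|Icc (a i) (b i)] := by
  rw [ENNReal.ofReal_prod_of_nonneg fun i _ => (sub_pos.2 (hab i)).le]
  simp_rw [← Real.volume_Icc]
  exact Measure.restrict_pi_pi_eq_smul_pi_cond _ _ (fun i => by simp [hab i])
    fun i => measure_Icc_lt_top.ne

theorem variance_sum_pi_cond_Icc {ι : Type*} [Fintype ι] {a b : ι → ℝ}
    (hab : ∀ i, a i < b i) {f : ι → ℝ → ℝ}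
    (hf : ∀ i, MemLp (f i) 2 volume[|Icc (a i) (b i)]) :
    Var[fun x => ∑ i, f i (x i); Measure.pi fun i => volume[|Icc (a i) (b i)]] =
      ∑ i, (b i - a i)⁻¹ *
        ∫ s in a i..b i, (f i s - (b i - a i)⁻¹ * ∫ t in a i..b i, f i t) ^ 2 := by
  have := fun i => isProbabilityMeasure_cond_Icc (hab i)
  rw [← Finset.sum_fn, variance_sum_pi hf]
  exact Finset.sum_congr rfl fun i _ => variance_cond_Icc (hab i).le (hf i).aemeasurable

theorem variance_lower_bound_additive_general
    (p : ℕ)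
    (μ : Measure (Fin p → ℝ))
    (pX : (Fin p → ℝ) → ℝ) (θlo θhi : ℝ)
    (hθlo : 0 < θlo)
    (hdens : μ = (volume.restrict (box p)).withDensity fun u => ENNReal.ofReal (pX u))
    (hbound : ∀ u ∈ box p, θlo ≤ pX u ∧ pX u ≤ θhi)
    (f : Fin p → ℝ → ℝ)
    (hsq : ∀ k, MemLp (f k) 2 (volume.restrict (Set.Icc (0 : ℝ) 1)))
    (fstar : (Fin p → ℝ) → ℝ)
    (hadd : ∀ u, fstar u = ∑ k, f k (u k))
    (ℓ u : Fin p → ℝ) (hl : ∀ j, 0 ≤ ℓ j) (hlu : ∀ j, ℓ j < u j) (hu : ∀ j, u j ≤ 1) :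
    condVar μ fstar (rect ℓ u) ≥
      θlo / θhi * ∑ j : Fin p, (u j - ℓ j)⁻¹ *
        ∫ s in ℓ j..u j,
          (f j s - (u j - ℓ j)⁻¹ * ∫ s' in ℓ j..u j, f j s') ^ 2 := by
  have := fun j => isProbabilityMeasure_cond_Icc (hlu j)
  set P : Measure (Fin p → ℝ) := Measure.pi fun j => volume[|Icc (ℓ j) (u j)]
  set V : ℝ := ∏ j, (u j - ℓ j)
  have hV : 0 < V := Finset.prod_pos fun j _ => sub_pos.2 (hlu j)
  have hA : MeasurableSet (rect ℓ u) := MeasurableSet.univ_pi fun j => measurableSet_Icc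
  have hAbox : rect ℓ u ⊆ box p := pi_mono fun j _ => Icc_subset_Icc (hl j) (hu j)
  have hvol : (volume.restrict (box p)).restrict (rect ℓ u) = ENNReal.ofReal V • P := by
    rw [Measure.restrict_restrict_of_subset hAbox]
    exact volume_restrict_pi_Icc_eq_smul_pi_cond hlu
  have hlo : ENNReal.ofReal (θlo * V) • P ≤ μ.restrict (rect ℓ u) := by
    have := smul_restrict_le_restrict_withDensity (ν := volume.restrict (box p)) hA
      fun x hx => (hbound x (hAbox hx)).1
    rwa [hvol, smul_smul, ← ENNReal.ofReal_mul' hV.le, ← hdens] at this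
  have hhi : μ.restrict (rect ℓ u) ≤ ENNReal.ofReal (θhi * V) • P := by
    have := restrict_withDensity_le_smul_restrict (ν := volume.restrict (box p)) hA
      fun x hx => (hbound x (hAbox hx)).2
    rwa [hvol, smul_smul, ← ENNReal.ofReal_mul' hV.le, ← hdens] at this
  have hf : ∀ j, MemLp (f j) 2 volume[|Icc (ℓ j) (u j)] := fun j =>
    (hsq j).cond_of_subset (Icc_subset_Icc (hl j) (hu j)) (by simp [hlu j])
  have hfstar : fstar = fun x => ∑ j, f j (x j) := funext hadd
  have hfstar_memLp : MemLp fstar 2 P := hfstar ▸ memLp_finsetSum _ fun j _ =>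
    (hf j).comp_measurePreserving (measurePreserving_eval _ j)
  calc θlo / θhi * _ = θlo * V / (θhi * V) * Var[fstar; P] := by
        rw [hfstar, variance_sum_pi_cond_Icc hlu hf, mul_div_mul_right _ _ hV.ne']
    _ ≤ _ := div_mul_variance_le_integral_sub_sq_div (mul_pos hθlo hV) hlo hhi hfstar_memLp _
    _ = condVar μ fstar (rect ℓ u) := by rw [Measure.restrict_apply_univ]; rfl

/-- **Lemma (variance lower bound for additive functions).**
If `μ` has density in `[θlo, θhi]` on `[0,1]^p` and `f*(u) = ∑ f_j(u_j)` with
square-integrable components, then for any nondegenerate closed rectangle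
`A = ∏[ℓ_j,u_j] ⊆ [0,1]^p`,
`Var(f*(X)|X∈A) ≥ (θlo/θhi) ∑_j (u_j−ℓ_j)⁻¹ ∫ (f_j − c_j)²`,
where `c_j` is the mean of `f_j` on `[ℓ_j, u_j]`. -/
theorem variance_lower_bound_additive
    (p : ℕ) (hp : 1 ≤ p)
    (μ : Measure (Fin p → ℝ)) [IsProbabilityMeasure μ]
    (pX : (Fin p → ℝ) → ℝ) (θlo θhi : ℝ)
    (hθlo : 0 < θlo) (hθhi : θlo ≤ θhi)
    (hdens : μ = (volume.restrict (box p)).withDensity fun u => ENNReal.ofReal (pX u))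
    (hbound : ∀ u ∈ box p, θlo ≤ pX u ∧ pX u ≤ θhi)
    (f : Fin p → ℝ → ℝ)
    (hfm : ∀ k, Measurable (f k))
    (hsq : ∀ k, MemLp (f k) 2 (volume.restrict (Set.Icc (0 : ℝ) 1)))
    (fstar : (Fin p → ℝ) → ℝ)
    (hadd : ∀ u, fstar u = ∑ k, f k (u k))
    (ℓ u : Fin p → ℝ) (hl : ∀ j, 0 ≤ ℓ j) (hlu : ∀ j, ℓ j < u j) (hu : ∀ j, u j ≤ 1) :
    condVar μ fstar (rect ℓ u) ≥
      θlo / θhi * ∑ j : Fin p, (u j - ℓ j)⁻¹ *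
        ∫ s in ℓ j..u j,
          (f j s - (u j - ℓ j)⁻¹ * ∫ s' in ℓ j..u j, f j s') ^ 2 :=
  variance_lower_bound_additive_general p μ pX θlo θhi hθlo hdens hbound f hsq fstar hadd ℓ u hl hlu
    hu
end
end

section
/- Let X be uniformly distributed on [0,1] (p = 1) and let f*(t) = t. Then for every interval A = [ℓ, r] ⊆ [0,1] with ℓ < r: (i) P(X ∈ A) · Var(f*(X) | X ∈ A) = (r − ℓ)³/12; (ii) the midpoint split satisfies Δ(A, 1, (ℓ+r)/2) = (r − ℓ)³/16; consequently sup_{b ∈ ℝ} Δ(A, 1, b) ≥ (3/4) · P(X ∈ A) · Var(f*(X) | X ∈ A), i.e. f* satisfies the Sufficient Impurity Decrease condition with parameter λ = 3/4. -/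
open MeasureTheory Set Filter
open scoped ENNReal Classical

noncomputable section

/-- Conditional mean `E[f(X) | X ∈ A]` for a real random variable (0 when `μ A = 0`). -/
def condMean1 (μ : Measure ℝ) (f : ℝ → ℝ) (A : Set ℝ) : ℝ :=
  (∫ x in A, f x ∂μ) / (μ A).toReal

/-- Conditional variance `Var(f(X) | X ∈ A)` (0 when `μ A = 0`). -/
def condVar1 (μ : Measure ℝ) (f : ℝ → ℝ) (A : Set ℝ) : ℝ :=
  (∫ x in A, (f x - condMean1 μ f A) ^ 2 ∂μ) / (μ A).toReal

/-- Population impurity decrease `Δ(A, 1, b)` for a univariate split at `b`. -/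
def impurity1 (μ : Measure ℝ) (f : ℝ → ℝ) (A : Set ℝ) (b : ℝ) : ℝ :=
  (μ A).toReal * condVar1 μ f A
    - (μ (A ∩ Set.Iic b)).toReal * condVar1 μ f (A ∩ Set.Iic b)
    - (μ (A ∩ Set.Ioi b)).toReal * condVar1 μ f (A ∩ Set.Ioi b)

/-!
The weighted variance `P(X ∈ A) · Var(X | X ∈ A)` of the identity on an interval of length `L`
under Lebesgue measure is `∫ (x - midpoint)² = L³/12`. Splitting at the midpoint leaves two
intervals of length `L/2`, so the decrease is `L³/12 - 2 (L/2)³/12 = L³/16 = (3/4) · L³/12`.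
Restricting Lebesgue measure to `[0,1]` changes nothing for subintervals of `[0,1]`, and the
supremum over splits is finite because every impurity decrease is at most the parent's
weighted variance.
-/

section General

variable {μ : Measure ℝ} {f : ℝ → ℝ} {A B S : Set ℝ}

lemma condMean1_restrict_of_subset (hAS : A ⊆ S) :
    condMean1 (μ.restrict S) f A = condMean1 μ f A := by
  rw [condMean1, condMean1, Measure.restrict_restrict_of_subset hAS, Measure.restrict_eq_self _ hAS]

lemma condVar1_restrict_of_subset (hAS : A ⊆ S) :
    condVar1 (μ.restrict S) f A = condVar1 μ f A := by
  rw [condVar1, condVar1, condMean1_restrict_of_subset hAS,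
    Measure.restrict_restrict_of_subset hAS, Measure.restrict_eq_self _ hAS]

lemma impurity1_restrict_of_subset (hAS : A ⊆ S) (b : ℝ) :
    impurity1 (μ.restrict S) f A b = impurity1 μ f A b := by
  have hL : A ∩ Iic b ⊆ S := inter_subset_left.trans hAS
  have hR : A ∩ Ioi b ⊆ S := inter_subset_left.trans hAS
  rw [impurity1, impurity1, Measure.restrict_eq_self _ hAS, Measure.restrict_eq_self _ hL,
    Measure.restrict_eq_self _ hR, condVar1_restrict_of_subset hAS,
    condVar1_restrict_of_subset hL, condVar1_restrict_of_subset hR]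

lemma condMean1_congr_ae (h : A =ᵐ[μ] B) : condMean1 μ f A = condMean1 μ f B := by
  rw [condMean1, condMean1, measure_congr h, setIntegral_congr_set h]

lemma condVar1_congr_ae (h : A =ᵐ[μ] B) : condVar1 μ f A = condVar1 μ f B := by
  rw [condVar1, condVar1, condMean1_congr_ae h, measure_congr h, setIntegral_congr_set h]

lemma toReal_mul_condVar1_nonneg (μ : Measure ℝ) (f : ℝ → ℝ) (A : Set ℝ) :
    0 ≤ (μ A).toReal * condVar1 μ f A :=
  mul_nonneg ENNReal.toReal_nonneg
    (div_nonneg (integral_nonneg fun _ => sq_nonneg _) ENNReal.toReal_nonneg)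

lemma impurity1_le (μ : Measure ℝ) (f : ℝ → ℝ) (A : Set ℝ) (b : ℝ) :
    impurity1 μ f A b ≤ (μ A).toReal * condVar1 μ f A := by
  have hL := toReal_mul_condVar1_nonneg μ f (A ∩ Iic b)
  have hR := toReal_mul_condVar1_nonneg μ f (A ∩ Ioi b)
  rw [impurity1]
  linarith

lemma bddAbove_range_impurity1 (μ : Measure ℝ) (f : ℝ → ℝ) (A : Set ℝ) :
    BddAbove (range (impurity1 μ f A)) :=
  ⟨_, forall_mem_range.mpr (impurity1_le μ f A)⟩

end General

lemma integral_sub_midpoint_sq (a b : ℝ) :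
    ∫ x in a..b, (x - (a + b) / 2) ^ 2 = (b - a) ^ 3 / 12 := by
  rw [intervalIntegral.integral_comp_sub_right (fun x => x ^ 2), integral_pow]
  ring

lemma setIntegral_Icc_eq_intervalIntegral {a b : ℝ} (hab : a ≤ b) (g : ℝ → ℝ) :
    ∫ x in Icc a b, g x = ∫ x in a..b, g x := by
  rw [integral_Icc_eq_integral_Ioc, intervalIntegral.integral_of_le hab]

lemma condMean1_volume_Icc_id {a b : ℝ} (hab : a < b) :
    condMean1 volume (fun s => s) (Icc a b) = (a + b) / 2 := by
  have hL : b - a ≠ 0 := sub_ne_zero.mpr hab.ne'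
  rw [condMean1, setIntegral_Icc_eq_intervalIntegral hab.le, integral_id, Real.volume_Icc,
    ENNReal.toReal_ofReal (sub_nonneg.mpr hab.le)]
  field_simp
  ring

lemma volume_Icc_mul_condVar1_id {a b : ℝ} (hab : a < b) :
    (volume (Icc a b)).toReal * condVar1 volume (fun s => s) (Icc a b) = (b - a) ^ 3 / 12 := by
  have hL : b - a ≠ 0 := sub_ne_zero.mpr hab.ne'
  rw [condVar1, condMean1_volume_Icc_id hab, setIntegral_Icc_eq_intervalIntegral hab.le,
    integral_sub_midpoint_sq, Real.volume_Icc, ENNReal.toReal_ofReal (sub_nonneg.mpr hab.le),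
    mul_div_cancel₀ _ hL]

lemma volume_Ioc_mul_condVar1_id {a b : ℝ} (hab : a < b) :
    (volume (Ioc a b)).toReal * condVar1 volume (fun s => s) (Ioc a b) = (b - a) ^ 3 / 12 := by
  rw [measure_congr Ioc_ae_eq_Icc, condVar1_congr_ae Ioc_ae_eq_Icc,
    volume_Icc_mul_condVar1_id hab]

lemma impurity1_volume_Icc_id_midpoint {a b : ℝ} (hab : a < b) :
    impurity1 volume (fun s => s) (Icc a b) ((a + b) / 2) = (b - a) ^ 3 / 16 := by
  have hleft : Icc a b ∩ Iic ((a + b) / 2) = Icc a ((a + b) / 2) := by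
    ext x; simp only [mem_inter_iff, mem_Icc, mem_Iic]; grind
  have hright : Icc a b ∩ Ioi ((a + b) / 2) = Ioc ((a + b) / 2) b := by
    ext x; simp only [mem_inter_iff, mem_Icc, mem_Ioi, mem_Ioc]; grind
  rw [impurity1, hleft, hright, volume_Icc_mul_condVar1_id hab,
    volume_Icc_mul_condVar1_id (by linarith), volume_Ioc_mul_condVar1_id (by linarith)]
  ring

/-- **Example (univariate linear function satisfies SID with λ = 3/4).**
For `X` uniform on `[0,1]` and `f*(t) = t`, for every interval `A = [ℓ, r] ⊆ [0,1]` with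
`ℓ < r`: (i) `P(X∈A)·Var(f*(X)|X∈A) = (r−ℓ)³/12`; (ii) the midpoint split gives
`Δ(A, 1, (ℓ+r)/2) = (r−ℓ)³/16`; hence `sup_b Δ(A,1,b) ≥ (3/4)·P(X∈A)·Var(f*(X)|X∈A)`. -/
theorem univariate_linear_sid (ℓ r : ℝ) (hℓ : 0 ≤ ℓ) (hℓr : ℓ < r) (hr : r ≤ 1) :
    ((volume.restrict (Set.Icc (0 : ℝ) 1)) (Set.Icc ℓ r)).toReal *
        condVar1 (volume.restrict (Set.Icc (0 : ℝ) 1)) (fun s => s) (Set.Icc ℓ r)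
      = (r - ℓ) ^ 3 / 12 ∧
    impurity1 (volume.restrict (Set.Icc (0 : ℝ) 1)) (fun s => s) (Set.Icc ℓ r) ((ℓ + r) / 2)
      = (r - ℓ) ^ 3 / 16 ∧
    (⨆ b : ℝ, impurity1 (volume.restrict (Set.Icc (0 : ℝ) 1)) (fun s => s) (Set.Icc ℓ r) b) ≥
      3 / 4 * (((volume.restrict (Set.Icc (0 : ℝ) 1)) (Set.Icc ℓ r)).toReal *
        condVar1 (volume.restrict (Set.Icc (0 : ℝ) 1)) (fun s => s) (Set.Icc ℓ r)) := by
  have hA : Icc ℓ r ⊆ Icc 0 1 := Icc_subset_Icc hℓ hr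
  have hvar : ((volume.restrict (Icc (0 : ℝ) 1)) (Icc ℓ r)).toReal *
      condVar1 (volume.restrict (Icc (0 : ℝ) 1)) (fun s => s) (Icc ℓ r) = (r - ℓ) ^ 3 / 12 := by
    rw [Measure.restrict_eq_self _ hA, condVar1_restrict_of_subset hA,
      volume_Icc_mul_condVar1_id hℓr]
  have hmid : impurity1 (volume.restrict (Icc (0 : ℝ) 1)) (fun s => s) (Icc ℓ r) ((ℓ + r) / 2)
      = (r - ℓ) ^ 3 / 16 := by
    rw [impurity1_restrict_of_subset hA, impurity1_volume_Icc_id_midpoint hℓr]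
  refine ⟨hvar, hmid, ?_⟩
  calc 3 / 4 * (((volume.restrict (Icc (0 : ℝ) 1)) (Icc ℓ r)).toReal *
        condVar1 (volume.restrict (Icc (0 : ℝ) 1)) (fun s => s) (Icc ℓ r))
      = impurity1 (volume.restrict (Icc (0 : ℝ) 1)) (fun s => s) (Icc ℓ r) ((ℓ + r) / 2) := by
        rw [hvar, hmid]; ring
    _ ≤ _ := le_ciSup (bddAbove_range_impurity1 _ _ _) _
end
end

section
/- Let g be a differentiable function on [0,1] with 0 < c₁ ≤ g'(t) ≤ c₂ for all t ∈ [0,1]. Then g belongs to LRP([0,1], 2√3·c₂/c₁); that is, for every subinterval [a,b] ⊆ [0,1] with a < b, (∫_a^b |g'(t)| dt)² ≤ (12 c₂²/c₁²) · (b−a)^{−1} · inf_{w ∈ ℝ} ∫_a^b |g(t) − w|² dt. -/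
/-!
If `g' ≥ c₁` then `g - c₁ t` is monotone, so `g` separates points at rate `c₁`:
`c₁ |t - s| ≤ |g t - g s|`. For any level `w`, projecting `w` onto `[g a, g b]` and pulling
it back by the intermediate value theorem gives a point `s` with `c₁ |t - s| ≤ |g t - w|` on
`[a, b]`, whence `∫_a^b |g - w|² ≥ c₁² ∫_a^b (t - s)² ≥ c₁² (b - a)³ / 12`. Together with
`∫_a^b |g'| ≤ c₂ (b - a)` this is the claim.
-/

open MeasureTheory Set

theorem Convex.monotoneOn_sub_mul_of_le_hasDerivWithinAt {D : Set ℝ} (hD : Convex ℝ D)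
    {g g' : ℝ → ℝ} {c : ℝ} (hg : ∀ x ∈ D, HasDerivWithinAt g (g' x) D x)
    (hc : ∀ x ∈ D, c ≤ g' x) : MonotoneOn (fun t => g t - c * t) D := by
  have hd : ∀ x ∈ D, HasDerivWithinAt (fun t => g t - c * t) (g' x - c) D x := fun x hx => by
    simpa using (hg x hx).fun_sub ((hasDerivWithinAt_id x D).const_mul c)
  exact monotoneOn_of_hasDerivWithinAt_nonneg hD (fun x hx => (hd x hx).continuousWithinAt)
    (fun x hx => (hd x (interior_subset hx)).mono interior_subset)
    (fun x hx => sub_nonneg.2 (hc x (interior_subset hx)))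

/-- `∫_a^b (t - s)² = (b - a)³ / 12 + (b - a) (s - (a + b) / 2)²`. -/
theorem div_le_integral_sq_sub {a b : ℝ} (hab : a ≤ b) (s : ℝ) :
    (b - a) ^ 3 / 12 ≤ ∫ t in a..b, (t - s) ^ 2 := by
  rw [intervalIntegral.integral_comp_sub_right (fun t => t ^ 2), integral_pow]
  nlinarith [mul_nonneg (sub_nonneg.2 hab) (sq_nonneg (a + b - 2 * s))]

section Growth

variable {g : ℝ → ℝ} {a b c : ℝ}

theorem mul_abs_sub_le_abs_sub_of_monotoneOn_sub_mul
    (hgrowth : MonotoneOn (fun t => g t - c * t) (Icc a b))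
    {x y : ℝ} (hx : x ∈ Icc a b) (hy : y ∈ Icc a b) : c * |x - y| ≤ |g x - g y| := by
  rcases le_total x y with hxy | hyx
  · have := hgrowth hx hy hxy
    rw [abs_sub_comm x, abs_sub_comm (g x), abs_of_nonneg (sub_nonneg.2 hxy)]
    exact le_abs.2 (Or.inl (by linarith))
  · have := hgrowth hy hx hyx
    rw [abs_of_nonneg (sub_nonneg.2 hyx)]
    exact le_abs.2 (Or.inl (by linarith))

theorem exists_mul_abs_sub_le_abs_sub (hab : a ≤ b) (hc : 0 ≤ c)
    (hg : ContinuousOn g (Icc a b)) (hgrowth : MonotoneOn (fun t => g t - c * t) (Icc a b))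
    (w : ℝ) : ∃ s ∈ Icc a b, ∀ t ∈ Icc a b, c * |t - s| ≤ |g t - w| := by
  have hmono : MonotoneOn g (Icc a b) := fun x hx y hy hxy => by
    have := hgrowth hx hy hxy
    nlinarith [mul_le_mul_of_nonneg_left hxy hc]
  have hgab : g a ≤ g b := hmono (left_mem_Icc.2 hab) (right_mem_Icc.2 hab) hab
  set proj := fun v => (projIcc (g a) (g b) hgab v : ℝ)
  obtain ⟨s, hs, hgs⟩ := intermediate_value_Icc hab hg (projIcc (g a) (g b) hgab w).2
  refine ⟨s, hs, fun t ht => ?_⟩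
  have hgt : g t ∈ Icc (g a) (g b) :=
    ⟨hmono (left_mem_Icc.2 hab) ht ht.1, hmono ht (right_mem_Icc.2 hab) ht.2⟩
  calc c * |t - s| ≤ |g t - g s| := mul_abs_sub_le_abs_sub_of_monotoneOn_sub_mul hgrowth ht hs
    _ = |proj (g t) - proj w| := by simp only [proj, projIcc_of_mem hgab hgt, hgs]
    _ ≤ |g t - w| := abs_projIcc_sub_projIcc hgab

theorem mul_div_le_integral_sq_abs_sub (hab : a ≤ b) (hc : 0 ≤ c)
    (hg : ContinuousOn g (Icc a b)) (hgrowth : MonotoneOn (fun t => g t - c * t) (Icc a b))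
    (w : ℝ) : c ^ 2 * (b - a) ^ 3 / 12 ≤ ∫ t in a..b, |g t - w| ^ 2 := by
  obtain ⟨s, -, hs⟩ := exists_mul_abs_sub_le_abs_sub hab hc hg hgrowth w
  have hpoint : ∀ t ∈ Icc a b, c ^ 2 * (t - s) ^ 2 ≤ |g t - w| ^ 2 := fun t ht => by
    rw [← sq_abs (t - s), ← mul_pow]
    exact pow_le_pow_left₀ (by positivity) (hs t ht) 2
  have hint : IntervalIntegrable (fun t => |g t - w| ^ 2) volume a b := by
    refine ContinuousOn.intervalIntegrable ?_
    rw [uIcc_of_le hab]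
    fun_prop
  calc c ^ 2 * (b - a) ^ 3 / 12 ≤ c ^ 2 * ∫ t in a..b, (t - s) ^ 2 := by
        rw [mul_div_assoc]
        exact mul_le_mul_of_nonneg_left (div_le_integral_sq_sub hab s) (sq_nonneg c)
    _ = ∫ t in a..b, c ^ 2 * (t - s) ^ 2 := (intervalIntegral.integral_const_mul _ _).symm
    _ ≤ ∫ t in a..b, |g t - w| ^ 2 :=
        intervalIntegral.integral_mono_on hab (Continuous.intervalIntegrable (by fun_prop) a b)
          hint hpoint

end Growth

/-- **Example (strongly increasing functions are in `LRP([0,1], 2√3 c₂/c₁)`).**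
If `g` is differentiable on `[0,1]` with `0 < c₁ ≤ g' ≤ c₂`, then for every subinterval
`[a,b] ⊆ [0,1]` with `a < b`,
`(∫_a^b |g'|)² ≤ (12 c₂²/c₁²) (b−a)⁻¹ inf_w ∫_a^b |g−w|²`. -/
theorem lrp_strongly_increasing (g g' : ℝ → ℝ) (c₁ c₂ : ℝ) (hc₁ : 0 < c₁)
    (hderiv : ∀ t ∈ Set.Icc (0 : ℝ) 1, HasDerivWithinAt g (g' t) (Set.Icc (0 : ℝ) 1) t)
    (hlo : ∀ t ∈ Set.Icc (0 : ℝ) 1, c₁ ≤ g' t)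
    (hhi : ∀ t ∈ Set.Icc (0 : ℝ) 1, g' t ≤ c₂) :
    ∀ a b : ℝ, 0 ≤ a → a < b → b ≤ 1 →
      (∫ t in a..b, |g' t|) ^ 2
        ≤ 12 * c₂ ^ 2 / c₁ ^ 2 * (b - a)⁻¹ * ⨅ w : ℝ, ∫ t in a..b, |g t - w| ^ 2 := by
  intro a b ha hab hb
  have hsub : Icc a b ⊆ Icc 0 1 := Icc_subset_Icc ha hb
  have hgrowth : MonotoneOn (fun t => g t - c₁ * t) (Icc a b) :=
    ((convex_Icc 0 1).monotoneOn_sub_mul_of_le_hasDerivWithinAt hderiv hlo).mono hsub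
  have hg : ContinuousOn g (Icc a b) := fun t ht =>
    (hderiv t (hsub ht)).continuousWithinAt.mono hsub
  have hinf : c₁ ^ 2 * (b - a) ^ 3 / 12 ≤ ⨅ w : ℝ, ∫ t in a..b, |g t - w| ^ 2 :=
    le_ciInf (mul_div_le_integral_sq_abs_sub hab.le hc₁.le hg hgrowth)
  have hvar : ‖∫ t in a..b, |g' t|‖ ≤ c₂ * |b - a| := by
    refine intervalIntegral.norm_integral_le_of_norm_le_const fun t ht => ?_
    rw [uIoc_of_le hab.le] at ht
    have ht' : t ∈ Icc (0 : ℝ) 1 := hsub (Ioc_subset_Icc_self ht)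
    rw [Real.norm_eq_abs, abs_abs, abs_of_pos (hc₁.trans_le (hlo t ht'))]
    exact hhi t ht'
  rw [Real.norm_eq_abs, abs_of_pos (sub_pos.2 hab)] at hvar
  calc (∫ t in a..b, |g' t|) ^ 2 ≤ (c₂ * (b - a)) ^ 2 :=
        sq_le_sq.2 (hvar.trans (le_abs_self _))
    _ = 12 * c₂ ^ 2 / c₁ ^ 2 * (b - a)⁻¹ * (c₁ ^ 2 * (b - a) ^ 3 / 12) := by
        field_simp [(sub_pos.2 hab).ne']
    _ ≤ 12 * c₂ ^ 2 / c₁ ^ 2 * (b - a)⁻¹ * ⨅ w : ℝ, ∫ t in a..b, |g t - w| ^ 2 := by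
        gcongr
end

section
/- Let 0 < σ < L and let g be a differentiable function on [0,1] that is L-smooth and σ-strongly convex, i.e. (σ/2)(t−s)² ≤ g(t) − g(s) − g'(s)(t−s) ≤ (L/2)(t−s)² for all t, s ∈ [0,1]. Then g belongs to LRP([0,1], 110·L/σ); that is, for every subinterval [a,b] ⊆ [0,1] with a < b, (∫_a^b |g'(t)| dt)² ≤ (110 L/σ)² · (b−a)^{−1} · inf_{w ∈ ℝ} ∫_a^b |g(t) − w|² dt. -/
/-!
Write `h = b - a` and `m` for the midpoint of `[a, b]`. Since `g'` is `L`-Lipschitz,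
`|g'| ≤ |g' m| + L h / 2` on `[a, b]`, which bounds `∫ |g'|` by `h (|g' m| + L h / 2)`.
On the half of `[a, b]` where `g` moves away from `g m` (the right half if `g' m ≥ 0`, the left
half otherwise), strong convexity makes `g` at `s` and at `s + h / 4` differ by at least
`(h / 4) (|g' m| + σ h / 8)` for all `s` in a quarter of the interval. Pairing each such `s`
with `s + h / 4` and using `(x - w)² + (y - w)² ≥ (x - y)² / 2` bounds `∫ |g - w|²` from below
by `h³ / 128 · (|g' m| + σ h / 8)²` for every `w`. The two bounds compare as claimed because
`12 (G + L h / 2) ≤ (110 L / σ) (G + σ h / 8)` for `G = |g' m|` when `σ ≤ L`, and `12² ≥ 128`.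
-/

open MeasureTheory Set Filter

lemma le_integral_sq_sub_of_translate_gap {f : ℝ → ℝ} {a b c ℓ D : ℝ}
    (hf : ContinuousOn f (Icc a b)) (hac : a ≤ c) (hℓ : 0 ≤ ℓ) (hcb : c + 2 * ℓ ≤ b)
    (hD : 0 ≤ D) (hgap : ∀ s ∈ Icc c (c + ℓ), D ≤ |f (s + ℓ) - f s|) (w : ℝ) :
    ℓ * D ^ 2 / 2 ≤ ∫ t in a..b, |f t - w| ^ 2 := by
  set F : ℝ → ℝ := fun t => |f t - w| ^ 2
  have hF : ContinuousOn F (Icc a b) := ((hf.sub continuousOn_const).abs).pow 2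
  have hFi : ∀ x y, a ≤ x → x ≤ y → y ≤ b → IntervalIntegrable F volume x y :=
    fun x y hax hxy hyb => (hF.mono (Icc_subset_Icc hax hyb)).intervalIntegrable_of_Icc hxy
  have hFi₁ := hFi c (c + ℓ) hac (by linarith) (by linarith)
  have hFi₂ : IntervalIntegrable (fun s => F (s + ℓ)) volume c (c + ℓ) := by
    simpa using
      (hFi (c + ℓ) (c + ℓ + ℓ) (by linarith) (by linarith) (by linarith)).comp_add_right ℓ
  have hpair : ∀ s ∈ Icc c (c + ℓ), D ^ 2 / 2 ≤ F s + F (s + ℓ) := by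
    intro s hs
    have := pow_le_pow_left₀ hD (hgap s hs) 2
    simp only [F, sq_abs] at this ⊢
    nlinarith [sq_nonneg (f s + f (s + ℓ) - 2 * w)]
  calc ℓ * D ^ 2 / 2 = ∫ _ in c..c + ℓ, D ^ 2 / 2 := by simp
    _ ≤ ∫ s in c..c + ℓ, (F s + F (s + ℓ)) :=
        intervalIntegral.integral_mono_on (by linarith) intervalIntegrable_const
          (hFi₁.add hFi₂) hpair
    _ = ∫ s in c..c + ℓ + ℓ, F s := by
        rw [intervalIntegral.integral_add hFi₁ hFi₂, intervalIntegral.integral_comp_add_right,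
          intervalIntegral.integral_add_adjacent_intervals hFi₁
            (hFi _ _ (by linarith) (by linarith) (by linarith))]
    _ ≤ ∫ t in a..b, F t :=
        intervalIntegral.integral_mono_interval hac (by linarith) (by linarith)
          (Eventually.of_forall fun t => sq_nonneg _) (hFi a b le_rfl (by linarith) le_rfl)

section DerivBounds

variable {g g' : ℝ → ℝ} {S : Set ℝ} {σ L s t : ℝ}

lemma mul_sq_le_deriv_sub_mul
    (hsc : ∀ t ∈ S, ∀ s ∈ S, σ / 2 * (t - s) ^ 2 ≤ g t - g s - g' s * (t - s))
    (hs : s ∈ S) (ht : t ∈ S) : σ * (t - s) ^ 2 ≤ (g' t - g' s) * (t - s) := by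
  nlinarith [hsc t ht s hs, hsc s hs t ht]

lemma deriv_sub_mul_le_mul_sq
    (hsm : ∀ t ∈ S, ∀ s ∈ S, g t - g s - g' s * (t - s) ≤ L / 2 * (t - s) ^ 2)
    (hs : s ∈ S) (ht : t ∈ S) : (g' t - g' s) * (t - s) ≤ L * (t - s) ^ 2 := by
  nlinarith [hsm t ht s hs, hsm s hs t ht]

lemma deriv_le_deriv_of_le (hσ : 0 ≤ σ)
    (hsc : ∀ t ∈ S, ∀ s ∈ S, σ / 2 * (t - s) ^ 2 ≤ g t - g s - g' s * (t - s))
    (hs : s ∈ S) (ht : t ∈ S) (hst : s ≤ t) : g' s ≤ g' t := by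
  rcases hst.eq_or_lt with rfl | hst
  · rfl
  nlinarith [mul_sq_le_deriv_sub_mul hsc hs ht, mul_nonneg hσ (sq_nonneg (t - s))]

lemma abs_deriv_sub_le (hσ : 0 ≤ σ)
    (hsc : ∀ t ∈ S, ∀ s ∈ S, σ / 2 * (t - s) ^ 2 ≤ g t - g s - g' s * (t - s))
    (hsm : ∀ t ∈ S, ∀ s ∈ S, g t - g s - g' s * (t - s) ≤ L / 2 * (t - s) ^ 2)
    (hs : s ∈ S) (ht : t ∈ S) : |g' t - g' s| ≤ L * |t - s| := by
  wlog hst : s ≤ t generalizing s t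
  · rw [abs_sub_comm, abs_sub_comm t]
    exact this ht hs (le_of_not_ge hst)
  rcases hst.eq_or_lt with rfl | hst
  · simp
  have hmono := deriv_le_deriv_of_le hσ hsc hs ht hst.le
  rw [abs_of_nonneg (sub_nonneg.2 hmono), abs_of_pos (sub_pos.2 hst)]
  nlinarith [deriv_sub_mul_le_mul_sq hsm hs ht]

lemma mul_add_le_sub_of_le_deriv
    (hsc : ∀ t ∈ S, ∀ s ∈ S, σ / 2 * (t - s) ^ 2 ≤ g t - g s - g' s * (t - s))
    {ℓ G : ℝ} (hℓ : 0 ≤ ℓ) (hs : s ∈ S) (hsℓ : s + ℓ ∈ S) (hG : G ≤ g' s) :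
    ℓ * (G + σ * ℓ / 2) ≤ g (s + ℓ) - g s := by
  have := hsc _ hsℓ _ hs
  rw [add_sub_cancel_left] at this
  nlinarith [mul_le_mul_of_nonneg_left hG hℓ]

lemma mul_add_le_sub_of_deriv_le
    (hsc : ∀ t ∈ S, ∀ s ∈ S, σ / 2 * (t - s) ^ 2 ≤ g t - g s - g' s * (t - s))
    {ℓ G : ℝ} (hℓ : 0 ≤ ℓ) (hs : s ∈ S) (hsℓ : s + ℓ ∈ S) (hG : g' (s + ℓ) ≤ -G) :
    ℓ * (G + σ * ℓ / 2) ≤ g s - g (s + ℓ) := by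
  have := hsc _ hs _ hsℓ
  rw [sub_add_cancel_left, neg_sq] at this
  nlinarith [mul_le_mul_of_nonneg_left hG hℓ]

lemma integral_abs_deriv_le {a b : ℝ} (hσ : 0 ≤ σ) (hL : 0 ≤ L)
    (hsc : ∀ t ∈ S, ∀ s ∈ S, σ / 2 * (t - s) ^ 2 ≤ g t - g s - g' s * (t - s))
    (hsm : ∀ t ∈ S, ∀ s ∈ S, g t - g s - g' s * (t - s) ≤ L / 2 * (t - s) ^ 2)
    (hab : a ≤ b) (hS : Icc a b ⊆ S) :
    ∫ t in a..b, |g' t| ≤ (b - a) * (|g' ((a + b) / 2)| + L * (b - a) / 2) := by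
  have hm : (a + b) / 2 ∈ S := hS ⟨by linarith, by linarith⟩
  have hbound : ∀ t ∈ uIoc a b, ‖|g' t|‖ ≤ |g' ((a + b) / 2)| + L * (b - a) / 2 := by
    intro t ht
    rw [uIoc_of_le hab] at ht
    have hdist : |t - (a + b) / 2| ≤ (b - a) / 2 :=
      abs_le.2 ⟨by linarith [ht.1], by linarith [ht.2]⟩
    calc ‖|g' t|‖ = |g' ((a + b) / 2) + (g' t - g' ((a + b) / 2))| := by simp
      _ ≤ |g' ((a + b) / 2)| + L * |t - (a + b) / 2| :=
          (abs_add_le _ _).trans (add_le_add le_rfl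
            (abs_deriv_sub_le hσ hsc hsm hm (hS (Ioc_subset_Icc_self ht))))
      _ ≤ |g' ((a + b) / 2)| + L * (b - a) / 2 := by nlinarith
  calc ∫ t in a..b, |g' t| ≤ ‖∫ t in a..b, |g' t|‖ := le_abs_self _
    _ ≤ _ := by
      have := intervalIntegral.norm_integral_le_of_norm_le_const hbound
      rwa [abs_of_nonneg (sub_nonneg.2 hab), mul_comm] at this

lemma le_integral_sq_sub_of_stronglyConvex {a b : ℝ} (hσ : 0 ≤ σ)
    (hsc : ∀ t ∈ S, ∀ s ∈ S, σ / 2 * (t - s) ^ 2 ≤ g t - g s - g' s * (t - s))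
    (hab : a ≤ b) (hS : Icc a b ⊆ S) (hg : ContinuousOn g (Icc a b)) (w : ℝ) :
    (b - a) ^ 3 / 128 * (|g' ((a + b) / 2)| + σ * (b - a) / 8) ^ 2
      ≤ ∫ t in a..b, |g t - w| ^ 2 := by
  set m := (a + b) / 2 with hm
  set ℓ := (b - a) / 4 with hℓ_def
  have hℓ : 0 ≤ ℓ := by positivity
  have hma : m = a + 2 * ℓ := by rw [hm, hℓ_def]; ring
  have hbm : b = m + 2 * ℓ := by rw [hm, hℓ_def]; ring
  have hmS : m ∈ S := hS ⟨by linarith, by linarith⟩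
  have hD : 0 ≤ ℓ * (|g' m| + σ * ℓ / 2) := by positivity
  calc (b - a) ^ 3 / 128 * (|g' m| + σ * (b - a) / 8) ^ 2
      = ℓ * (ℓ * (|g' m| + σ * ℓ / 2)) ^ 2 / 2 := by ring
    _ ≤ ∫ t in a..b, |g t - w| ^ 2 := by
      rcases le_total 0 (g' m) with hpos | hneg
      · refine le_integral_sq_sub_of_translate_gap (c := m) hg (by linarith) hℓ (by linarith)
          hD (fun s hs => ?_) w
        have hs' : s ∈ S := hS ⟨by linarith [hs.1], by linarith [hs.2]⟩
        have hsℓ : s + ℓ ∈ S := hS ⟨by linarith [hs.1], by linarith [hs.2]⟩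
        refine (mul_add_le_sub_of_le_deriv hsc hℓ hs' hsℓ ?_).trans (le_abs_self _)
        rw [abs_of_nonneg hpos]
        exact deriv_le_deriv_of_le hσ hsc hmS hs' hs.1
      · refine le_integral_sq_sub_of_translate_gap hg le_rfl hℓ (by linarith) hD
          (fun s hs => ?_) w
        have hs' : s ∈ S := hS ⟨hs.1, by linarith [hs.2]⟩
        have hsℓ : s + ℓ ∈ S := hS ⟨by linarith [hs.1], by linarith [hs.2]⟩
        refine (mul_add_le_sub_of_deriv_le hsc hℓ hs' hsℓ ?_).trans
          ((le_abs_self _).trans (abs_sub_comm _ _).le)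
        rw [abs_of_nonpos hneg, neg_neg]
        exact deriv_le_deriv_of_le hσ hsc hsℓ hmS (by linarith [hs.2])

end DerivBounds

/-- **Example (smooth strongly convex functions are in `LRP([0,1], 110 L/σ)`).**
If `g` is differentiable on `[0,1]`, `L`-smooth and `σ`-strongly convex (`0 < σ < L`),
then for every subinterval `[a,b] ⊆ [0,1]` with `a < b`,
`(∫_a^b |g'|)² ≤ (110 L/σ)² (b−a)⁻¹ inf_w ∫_a^b |g−w|²`. -/
theorem lrp_smooth_strongly_convex (g g' : ℝ → ℝ) (σ L : ℝ) (hσ : 0 < σ) (hσL : σ < L)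
    (hderiv : ∀ t ∈ Set.Icc (0 : ℝ) 1, HasDerivWithinAt g (g' t) (Set.Icc (0 : ℝ) 1) t)
    (hsc : ∀ t ∈ Set.Icc (0 : ℝ) 1, ∀ s ∈ Set.Icc (0 : ℝ) 1,
      σ / 2 * (t - s) ^ 2 ≤ g t - g s - g' s * (t - s))
    (hsm : ∀ t ∈ Set.Icc (0 : ℝ) 1, ∀ s ∈ Set.Icc (0 : ℝ) 1,
      g t - g s - g' s * (t - s) ≤ L / 2 * (t - s) ^ 2) :
    ∀ a b : ℝ, 0 ≤ a → a < b → b ≤ 1 →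
      (∫ t in a..b, |g' t|) ^ 2
        ≤ (110 * L / σ) ^ 2 * (b - a)⁻¹ * ⨅ w : ℝ, ∫ t in a..b, |g t - w| ^ 2 := by
  intro a b ha hab hb
  have hL : 0 < L := hσ.trans hσL
  have hS : Icc a b ⊆ Icc 0 1 := Icc_subset_Icc ha hb
  have hg : ContinuousOn g (Icc a b) := fun t ht =>
    (hderiv t (hS ht)).continuousWithinAt.mono hS
  have hint := integral_abs_deriv_le hσ.le hL.le hsc hsm hab.le hS
  have hvar := le_ciInf (le_integral_sq_sub_of_stronglyConvex hσ.le hsc hab.le hS hg)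
  set h := b - a
  set G := |g' ((a + b) / 2)|
  have hh : 0 < h := sub_pos.2 hab
  have hK : 1 ≤ L / σ := (one_le_div hσ).2 hσL.le
  have hG : 0 ≤ G := abs_nonneg _
  have hconst : 12 * (G + L * h / 2) ≤ 110 * L / σ * (G + σ * h / 8) := by
    have : 110 * L / σ * (G + σ * h / 8) = 110 * (L / σ) * G + 110 / 8 * L * h := by
      field_simp
    nlinarith [mul_le_mul_of_nonneg_right hK hG]
  calc (∫ t in a..b, |g' t|) ^ 2 ≤ (h * (G + L * h / 2)) ^ 2 :=
        pow_le_pow_left₀ (intervalIntegral.integral_nonneg hab.le fun t _ => abs_nonneg _) hint 2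
    _ ≤ h ^ 2 / 128 * (110 * L / σ * (G + σ * h / 8)) ^ 2 := by
        nlinarith [pow_le_pow_left₀ (by positivity) hconst 2, sq_nonneg (h * (G + L * h / 2))]
    _ = (110 * L / σ) ^ 2 * h⁻¹ * (h ^ 3 / 128 * (G + σ * h / 8) ^ 2) := by
        field_simp
    _ ≤ _ := mul_le_mul_of_nonneg_left hvar (by positivity)
end

section
/- For every integer r ≥ 0 there exists a constant C_r > 0, depending only on r, such that every real polynomial g of degree at most r satisfies, for all real numbers a < b, (∫_a^b |g'(t)| dt)² ≤ (C_r/(b−a)) · inf_{w ∈ ℝ} ∫_a^b |g(t) − w|² dt; that is, g ∈ LRP(ℝ, √C_r). -/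
/-
On the finite-dimensional space of real polynomials of degree at most `r`, both
`p ↦ ∫₀¹ |p'|` and `p ↦ (∫₀¹ p²)^(1/2)` are continuous and absolutely homogeneous, and the
second vanishes only at `p = 0`. Comparing them on the compact unit sphere of coefficient
space gives `(∫₀¹ |p'|)² ≤ K ∫₀¹ p²`. The substitution `t = a + (b - a) s` transports this
to `[a, b]` with the factor `1 / (b - a)`; applied to `g - w`, which has the same derivative
as `g`, for every `w`, it bounds the infimum.
-/

open MeasureTheory Polynomial

theorem exists_pos_forall_le_mul_of_homogeneous {E : Type*} [NormedAddCommGroup E]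
    [NormedSpace ℝ E] [FiniteDimensional ℝ E] {F G : E → ℝ} (hF : Continuous F)
    (hG : Continuous G) (hF_smul : ∀ (t : ℝ) x, F (t • x) = |t| * F x)
    (hG_smul : ∀ (t : ℝ) x, G (t • x) = |t| * G x) (hG_pos : ∀ x ≠ 0, 0 < G x) :
    ∃ K > 0, ∀ x, F x ≤ K * G x := by
  have hsphere : ∀ x ∈ Metric.sphere (0 : E) 1, x ≠ 0 := fun x hx h ↦ by simp [h] at hx
  obtain ⟨K, hK, hbound⟩ := ((isCompact_sphere (0 : E) 1).image_of_continuousOn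
    (hF.continuousOn.div hG.continuousOn fun x hx ↦ (hG_pos x (hsphere x hx)).ne')
    ).isBounded.exists_pos_norm_le
  refine ⟨K, hK, fun x ↦ ?_⟩
  rcases eq_or_ne x 0 with rfl | hx
  · have hF0 := hF_smul 0 0
    have hG0 := hG_smul 0 0
    simp only [zero_smul, abs_zero, zero_mul] at hF0 hG0
    simp [hF0, hG0]
  have hnorm : 0 < ‖x‖ := norm_pos_iff.mpr hx
  set u := ‖x‖⁻¹ • x
  have hu : u ∈ Metric.sphere (0 : E) 1 := by simp [u, norm_smul, hnorm.ne']
  have hxu : x = ‖x‖ • u := by simp [u, smul_smul, hnorm.ne']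
  have hFu : F u ≤ K * G u := by
    have := (le_abs_self _).trans (hbound _ ⟨u, hu, rfl⟩)
    rwa [Pi.div_apply, div_le_iff₀ (hG_pos u (hsphere u hu))] at this
  rw [hxu, hF_smul, hG_smul, abs_norm, mul_left_comm]
  exact mul_le_mul_of_nonneg_left hFu hnorm.le

theorem intervalIntegral.integral_comp_affine_unitInterval (f : ℝ → ℝ) {a b : ℝ} (hab : a ≠ b) :
    ∫ s in (0 : ℝ)..1, f ((b - a) * s + a) = (b - a)⁻¹ * ∫ t in a..b, f t := by
  rw [integral_comp_mul_add f (sub_ne_zero.mpr hab.symm)]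
  simp

namespace Polynomial

theorem continuous_eval_linearMap {n : ℕ} (L : (Fin n → ℝ) →ₗ[ℝ] ℝ[X]) :
    Continuous fun q : (Fin n → ℝ) × ℝ ↦ (L q.1).eval q.2 := by
  have hL : (fun q : (Fin n → ℝ) × ℝ ↦ (L q.1).eval q.2) =
      fun q ↦ ∑ i, q.1 i * (L fun j ↦ if i = j then 1 else 0).eval q.2 := by
    funext q
    rw [L.pi_apply_eq_sum_univ]
    simp only [eval_finsetSum, eval_smul, smul_eq_mul]
  rw [hL]
  fun_prop

theorem integral_abs_eval_smul (t : ℝ) (p : ℝ[X]) (a b : ℝ) :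
    ∫ s in a..b, |(t • p).eval s| = |t| * ∫ s in a..b, |p.eval s| := by
  simp [abs_mul, intervalIntegral.integral_const_mul]

theorem integral_sq_eval_smul (t : ℝ) (p : ℝ[X]) (a b : ℝ) :
    ∫ s in a..b, (t • p).eval s ^ 2 = t ^ 2 * ∫ s in a..b, p.eval s ^ 2 := by
  simp [mul_pow, intervalIntegral.integral_const_mul]

theorem integral_sq_eval_pos {p : ℝ[X]} (hp : p ≠ 0) {a b : ℝ} (hab : a < b) :
    0 < ∫ s in a..b, p.eval s ^ 2 := by
  rw [intervalIntegral.integral_pos_iff_support_of_nonneg_ae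
    (Filter.Eventually.of_forall fun s ↦ sq_nonneg (p.eval s))
    ((p.continuous.pow 2).intervalIntegrable a b)]
  refine ⟨hab, ?_⟩
  have hroots : volume {s | p.IsRoot s} = 0 := (finite_setOfPred_isRoot hp).measure_zero _
  have hsupport : Function.support (fun s ↦ p.eval s ^ 2) ∩ Set.Ioc a b =
      Set.Ioc a b \ {s | p.IsRoot s} := by
    ext s
    simp [and_comm]
  rw [hsupport, measure_sdiff_null hroots, Real.volume_Ioc]
  simpa using hab

theorem exists_sq_integral_abs_derivative_le_unitInterval (r : ℕ) :
    ∃ K > 0, ∀ p : ℝ[X], p.natDegree ≤ r →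
      (∫ s in (0 : ℝ)..1, |(derivative p).eval s|) ^ 2 ≤
        K * ∫ s in (0 : ℝ)..1, p.eval s ^ 2 := by
  have hsq_nonneg (p : ℝ[X]) : 0 ≤ ∫ s in (0 : ℝ)..1, p.eval s ^ 2 :=
    intervalIntegral.integral_nonneg zero_le_one fun _ _ ↦ sq_nonneg _
  set P := ofFn (R := ℝ) (r + 1)
  set F : (Fin (r + 1) → ℝ) → ℝ := fun c ↦ ∫ s in (0 : ℝ)..1, |(derivative (P c)).eval s|
  set G : (Fin (r + 1) → ℝ) → ℝ := fun c ↦ √(∫ s in (0 : ℝ)..1, (P c).eval s ^ 2)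
  have hF : Continuous F := intervalIntegral.continuous_parametric_intervalIntegral_of_continuous'
    (continuous_eval_linearMap (derivative ∘ₗ P)).abs 0 1
  have hG : Continuous G := (intervalIntegral.continuous_parametric_intervalIntegral_of_continuous'
    ((continuous_eval_linearMap P).pow 2) 0 1).sqrt
  have hF_smul (t : ℝ) c : F (t • c) = |t| * F c := by
    simp only [F, map_smul, integral_abs_eval_smul]
  have hG_smul (t : ℝ) c : G (t • c) = |t| * G c := by
    simp only [G, map_smul, integral_sq_eval_smul, Real.sqrt_mul' _ (hsq_nonneg _),
      Real.sqrt_sq_eq_abs]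
  have hG_pos (c) (hc : c ≠ 0) : 0 < G c :=
    Real.sqrt_pos.mpr <| integral_sq_eval_pos ((injective_ofFn _).ne hc |>.trans_eq (map_zero P))
      zero_lt_one
  obtain ⟨K, hK, hFG⟩ := exists_pos_forall_le_mul_of_homogeneous hF hG hF_smul hG_smul hG_pos
  refine ⟨K ^ 2, by positivity, fun p hp ↦ ?_⟩
  obtain ⟨c, rfl⟩ : ∃ c, P c = p :=
    ⟨_, ofFn_comp_toFn_eq_id_of_natDegree_lt (Nat.lt_succ_of_le hp)⟩
  calc F c ^ 2
      ≤ (K * G c) ^ 2 := pow_le_pow_left₀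
        (intervalIntegral.integral_nonneg zero_le_one fun _ _ ↦ abs_nonneg _) (hFG c) 2
    _ = K ^ 2 * ∫ s in (0 : ℝ)..1, (P c).eval s ^ 2 := by
      rw [mul_pow, Real.sq_sqrt (hsq_nonneg _)]

theorem sq_integral_abs_derivative_le_of_unitInterval {r : ℕ} {K : ℝ}
    (hK : ∀ p : ℝ[X], p.natDegree ≤ r →
      (∫ s in (0 : ℝ)..1, |(derivative p).eval s|) ^ 2 ≤ K * ∫ s in (0 : ℝ)..1, p.eval s ^ 2)
    {p : ℝ[X]} (hp : p.natDegree ≤ r) {a b : ℝ} (hab : a < b) :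
    (∫ t in a..b, |(derivative p).eval t|) ^ 2 ≤ K / (b - a) * ∫ t in a..b, p.eval t ^ 2 := by
  have hba : 0 < b - a := sub_pos.mpr hab
  set q := p.comp (C (b - a) * X + C a)
  have hq : q.natDegree ≤ r := by
    rwa [natDegree_comp, natDegree_linear hba.ne', mul_one]
  have hq' (s : ℝ) :
      |(derivative q).eval s| = (b - a) * |(derivative p).eval ((b - a) * s + a)| := by
    simp [q, derivative_comp, eval_comp, abs_mul, abs_of_pos hba]
  have hderiv :
      ∫ s in (0 : ℝ)..1, |(derivative q).eval s| = ∫ t in a..b, |(derivative p).eval t| := by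
    simp_rw [hq']
    rw [intervalIntegral.integral_const_mul,
      intervalIntegral.integral_comp_affine_unitInterval (fun t ↦ |(derivative p).eval t|)
        hab.ne, mul_inv_cancel_left₀ hba.ne']
  have hsq : ∫ s in (0 : ℝ)..1, q.eval s ^ 2 = (b - a)⁻¹ * ∫ t in a..b, p.eval t ^ 2 := by
    rw [← intervalIntegral.integral_comp_affine_unitInterval (fun t ↦ p.eval t ^ 2) hab.ne]
    simp [q]
  calc (∫ t in a..b, |(derivative p).eval t|) ^ 2
      = (∫ s in (0 : ℝ)..1, |(derivative q).eval s|) ^ 2 := by rw [hderiv]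
    _ ≤ K * ∫ s in (0 : ℝ)..1, q.eval s ^ 2 := hK q hq
    _ = K / (b - a) * ∫ t in a..b, p.eval t ^ 2 := by rw [hsq, div_eq_mul_inv, mul_assoc]

end Polynomial

/-- **Example (polynomials of degree at most `r` are in `LRP(ℝ, √C_r)`).**
For every `r` there is a constant `C_r > 0`, depending only on `r`, such that every
polynomial `g` of degree at most `r` satisfies, for all `a < b`,
`(∫_a^b |g'|)² ≤ (C_r/(b−a)) inf_w ∫_a^b |g−w|²`. -/
theorem lrp_polynomial (r : ℕ) :
    ∃ C : ℝ, 0 < C ∧ ∀ g : Polynomial ℝ, g.natDegree ≤ r → ∀ a b : ℝ, a < b →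
      (∫ t in a..b, |(Polynomial.derivative g).eval t|) ^ 2
        ≤ C / (b - a) * ⨅ w : ℝ, ∫ t in a..b, |g.eval t - w| ^ 2 := by
  obtain ⟨K, hK, hunit⟩ := exists_sq_integral_abs_derivative_le_unitInterval r
  refine ⟨K, hK, fun g hg a b hab ↦ ?_⟩
  rw [Real.mul_iInf_of_nonneg (div_nonneg hK.le (sub_pos.mpr hab).le)]
  refine le_ciInf fun w ↦ ?_
  have key := sq_integral_abs_derivative_le_of_unitInterval hunit (p := g - C w)
    (natDegree_sub_C.trans_le hg) hab
  simpa only [derivative_sub, derivative_C, sub_zero, eval_sub, eval_C, sq_abs] using key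
end

section
/- Let [a,b] ⊆ [0,1] with a < b and let c ∈ (a,b). Let h: [a,b] → ℝ be continuously differentiable on (a,c) and on (c,b) with |h'| Lebesgue-integrable on (a,c) ∪ (c,b), with h(s) − h(t) = ∫_t^s h'(τ) dτ whenever t, s lie in the same of these two intervals, and suppose the one-sided limits h(c−) := lim_{t→c−} h(t) and h(c+) := lim_{t→c+} h(t) exist and are finite; set Δh(c) := h(c+) − h(c−). If |Δh(c)| > 4 · max{∫_a^c |h'(t)| dt, ∫_c^b |h'(t)| dt}, then inf_{w ∈ ℝ} ∫_a^b (h(t) − w)² dt ≥ min{c − a, b − c} · (Δh(c))² / 16. -/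
/-!
On each side of `c` the fundamental theorem of calculus keeps `h` within `∫ |h'| < |Δh(c)|/4` of
its one-sided limit. Every constant `w` lies at distance at least `|Δh(c)|/2` from one of the two
limits, so `|h - w| ≥ |Δh(c)|/4` on the corresponding side, and integrating `(h - w)²` over that
side alone gives the bound.
-/

open MeasureTheory Set Filter
open scoped Interval

lemma abs_sub_le_setIntegral_abs {f f' : ℝ → ℝ} {s : Set ℝ} (hs : s.OrdConnected)
    (hint : IntegrableOn (fun t => |f' t|) s)
    (hftc : ∀ t ∈ s, ∀ u ∈ s, f u - f t = ∫ τ in t..u, f' τ) {t u : ℝ} (ht : t ∈ s)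
    (hu : u ∈ s) : |f u - f t| ≤ ∫ τ in s, |f' τ| := by
  rw [hftc t ht u hu]
  calc |∫ τ in t..u, f' τ| ≤ ∫ τ in Ι t u, |f' τ| := by
        simpa only [Real.norm_eq_abs] using
          intervalIntegral.norm_integral_le_integral_norm_uIoc (f := f') (a := t) (b := u)
    _ ≤ ∫ τ in s, |f' τ| :=
        setIntegral_mono_set hint (.of_forall fun _ => abs_nonneg _)
          (hs.uIoc_subset ht hu).eventuallyLE

lemma abs_sub_le_setIntegral_abs_of_tendsto {f f' : ℝ → ℝ} {s : Set ℝ} (hs : s.OrdConnected)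
    (hint : IntegrableOn (fun t => |f' t|) s)
    (hftc : ∀ t ∈ s, ∀ u ∈ s, f u - f t = ∫ τ in t..u, f' τ) {l : Filter ℝ} [l.NeBot]
    (hls : ∀ᶠ u in l, u ∈ s) {L : ℝ} (hfL : Tendsto f l (nhds L)) {t : ℝ} (ht : t ∈ s) :
    |f t - L| ≤ ∫ τ in s, |f' τ| := by
  rw [abs_sub_comm]
  exact le_of_tendsto (hfL.sub_const (f t)).abs
    (hls.mono fun _ hu => abs_sub_le_setIntegral_abs hs hint hftc ht hu)

lemma integrableOn_sq_sub_of_abs_sub_le {μ : Measure ℝ} {f : ℝ → ℝ} {s : Set ℝ}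
    (hs : MeasurableSet s) (hμs : μ s ≠ ⊤) (hf : ContinuousOn f s) {L M : ℝ}
    (hfL : ∀ t ∈ s, |f t - L| ≤ M) (w : ℝ) :
    IntegrableOn (fun t => (f t - w) ^ 2) s μ := by
  refine .of_bound hμs.lt_top (((hf.sub continuousOn_const).pow 2).aestronglyMeasurable hs)
    ((M + |L - w|) ^ 2) ?_
  refine (ae_restrict_iff' hs).2 (.of_forall fun t ht => ?_)
  have hfw : |f t - w| ≤ M + |L - w| := by
    calc |f t - w| ≤ |f t - L| + |L - w| := abs_sub_le _ _ _
      _ ≤ M + |L - w| := by linarith [hfL t ht]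
  rw [Real.norm_eq_abs, abs_pow]
  exact pow_le_pow_left₀ (abs_nonneg _) hfw 2

lemma half_abs_sub_le_abs_sub_or (x y w : ℝ) :
    |x - y| / 2 ≤ |x - w| ∨ |x - y| / 2 ≤ |y - w| := by
  by_contra! hxy
  linarith [abs_sub_le x w y, abs_sub_comm y w]

lemma sq_mul_measureReal_le_setIntegral_sq_sub {μ : Measure ℝ} {f : ℝ → ℝ} {s T : Set ℝ}
    (hsT : s ⊆ T) (hs : MeasurableSet s) (hμs : μ s ≠ ⊤) {w : ℝ}
    (hint : IntegrableOn (fun t => (f t - w) ^ 2) T μ) {L M r : ℝ}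
    (hfL : ∀ t ∈ s, |f t - L| ≤ M) (hr : 0 ≤ r) (hLw : r + M ≤ |L - w|) :
    r ^ 2 * μ.real s ≤ ∫ t in T, (f t - w) ^ 2 ∂μ := by
  have hbound : ∀ t ∈ s, r ^ 2 ≤ (f t - w) ^ 2 := fun t ht => by
    have : r ≤ |f t - w| := by linarith [hfL t ht, abs_sub_le L (f t) w, abs_sub_comm L (f t)]
    simpa only [sq_abs] using pow_le_pow_left₀ hr this 2
  exact (setIntegral_ge_of_const_le_real hs hμs hbound (hint.mono_set hsT)).trans
    (setIntegral_mono_set hint (.of_forall fun _ => sq_nonneg _) hsT.eventuallyLE)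

theorem jump_forces_l2_distance_general (a b c : ℝ) (h h' : ℝ → ℝ)
    (hac : a < c) (hcb : c < b)
    (hd1 : ∀ t ∈ Set.Ioo a c, HasDerivAt h (h' t) t)
    (hd2 : ∀ t ∈ Set.Ioo c b, HasDerivAt h (h' t) t)
    (hint1 : IntegrableOn (fun t => |h' t|) (Set.Ioo a c) volume)
    (hint2 : IntegrableOn (fun t => |h' t|) (Set.Ioo c b) volume)
    (hftc1 : ∀ t ∈ Set.Ioo a c, ∀ s ∈ Set.Ioo a c, h s - h t = ∫ τ in t..s, h' τ)
    (hftc2 : ∀ t ∈ Set.Ioo c b, ∀ s ∈ Set.Ioo c b, h s - h t = ∫ τ in t..s, h' τ)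
    (hcm hcp : ℝ)
    (hlimL : Tendsto h (nhdsWithin c (Set.Iio c)) (nhds hcm))
    (hlimR : Tendsto h (nhdsWithin c (Set.Ioi c)) (nhds hcp))
    (hjump : 4 * max (∫ t in a..c, |h' t|) (∫ t in c..b, |h' t|) < |hcp - hcm|) :
    (⨅ w : ℝ, ∫ t in a..b, (h t - w) ^ 2) ≥ min (c - a) (b - c) * (hcp - hcm) ^ 2 / 16 := by
  rw [intervalIntegral.integral_of_le hac.le, integral_Ioc_eq_integral_Ioo,
    intervalIntegral.integral_of_le hcb.le, integral_Ioc_eq_integral_Ioo,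
    mul_max_of_nonneg _ _ zero_le_four, max_lt_iff] at hjump
  have hnear1 : ∀ t ∈ Ioo a c, |h t - hcm| ≤ ∫ τ in Ioo a c, |h' τ| := fun _ ht =>
    abs_sub_le_setIntegral_abs_of_tendsto ordConnected_Ioo hint1 hftc1 (Ioo_mem_nhdsLT hac)
      hlimL ht
  have hnear2 : ∀ t ∈ Ioo c b, |h t - hcp| ≤ ∫ τ in Ioo c b, |h' τ| := fun _ ht =>
    abs_sub_le_setIntegral_abs_of_tendsto ordConnected_Ioo hint2 hftc2 (Ioo_mem_nhdsGT hcb)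
      hlimR ht
  have hint : ∀ w, IntegrableOn (fun t => (h t - w) ^ 2) (Ioc a b) := fun w => by
    rw [integrableOn_Ioc_iff_integrableOn_Ioo, ← Ioo_union_Ico_eq_Ioo hac hcb.le,
      integrableOn_union, integrableOn_Ico_iff_integrableOn_Ioo]
    exact ⟨integrableOn_sq_sub_of_abs_sub_le measurableSet_Ioo measure_Ioo_lt_top.ne
        (fun t ht => (hd1 t ht).continuousAt.continuousWithinAt) hnear1 w,
      integrableOn_sq_sub_of_abs_sub_le measurableSet_Ioo measure_Ioo_lt_top.ne
        (fun t ht => (hd2 t ht).continuousAt.continuousWithinAt) hnear2 w⟩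
  have hr : (|hcp - hcm| / 4) ^ 2 = (hcp - hcm) ^ 2 / 16 := by rw [div_pow, sq_abs]; norm_num
  refine le_ciInf fun w => ?_
  rw [intervalIntegral.integral_of_le (hac.trans hcb).le]
  obtain ⟨hjump1, hjump2⟩ := hjump
  rcases half_abs_sub_le_abs_sub_or hcp hcm w with hw | hw
  · have := sq_mul_measureReal_le_setIntegral_sq_sub
      (Ioo_subset_Ioc_self.trans (Ioc_subset_Ioc_left hac.le)) measurableSet_Ioo
      measure_Ioo_lt_top.ne (hint w) hnear2 (r := |hcp - hcm| / 4) (by positivity) (by linarith)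
    rw [Real.volume_real_Ioo_of_le hcb.le, hr] at this
    nlinarith [min_le_right (c - a) (b - c), sq_nonneg (hcp - hcm)]
  · have := sq_mul_measureReal_le_setIntegral_sq_sub
      (Ioo_subset_Ioc_self.trans (Ioc_subset_Ioc_right hcb.le)) measurableSet_Ioo
      measure_Ioo_lt_top.ne (hint w) hnear1 (r := |hcp - hcm| / 4) (by positivity) (by linarith)
    rw [Real.volume_real_Ioo_of_le hac.le, hr] at this
    nlinarith [min_le_left (c - a) (b - c), sq_nonneg (hcp - hcm)]

/-- **Lemma (a large jump forces large L² distance to constants).**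
Let `[a,b] ⊆ [0,1]`, `c ∈ (a,b)`, and let `h` be continuously differentiable on `(a,c)` and
on `(c,b)` with `|h'|` integrable on both pieces and satisfying the fundamental theorem of
calculus on each piece. Suppose the one-sided limits `h(c−) = hcm` and `h(c+) = hcp` exist
and are finite, and that the jump `Δh(c) = hcp − hcm` satisfies
`|Δh(c)| > 4 max{∫_a^c |h'|, ∫_c^b |h'|}`. Then
`inf_w ∫_a^b (h−w)² ≥ min{c−a, b−c} (Δh(c))²/16`. -/
theorem jump_forces_l2_distance (a b c : ℝ) (h h' : ℝ → ℝ)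
    (ha : 0 ≤ a) (hb : b ≤ 1) (hac : a < c) (hcb : c < b)
    (hd1 : ∀ t ∈ Set.Ioo a c, HasDerivAt h (h' t) t)
    (hd2 : ∀ t ∈ Set.Ioo c b, HasDerivAt h (h' t) t)
    (hcont1 : ContinuousOn h' (Set.Ioo a c))
    (hcont2 : ContinuousOn h' (Set.Ioo c b))
    (hint1 : IntegrableOn (fun t => |h' t|) (Set.Ioo a c) volume)
    (hint2 : IntegrableOn (fun t => |h' t|) (Set.Ioo c b) volume)
    (hftc1 : ∀ t ∈ Set.Ioo a c, ∀ s ∈ Set.Ioo a c, h s - h t = ∫ τ in t..s, h' τ)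
    (hftc2 : ∀ t ∈ Set.Ioo c b, ∀ s ∈ Set.Ioo c b, h s - h t = ∫ τ in t..s, h' τ)
    (hcm hcp : ℝ)
    (hlimL : Tendsto h (nhdsWithin c (Set.Iio c)) (nhds hcm))
    (hlimR : Tendsto h (nhdsWithin c (Set.Ioi c)) (nhds hcp))
    (hjump : 4 * max (∫ t in a..c, |h' t|) (∫ t in c..b, |h' t|) < |hcp - hcm|) :
    (⨅ w : ℝ, ∫ t in a..b, (h t - w) ^ 2) ≥ min (c - a) (b - c) * (hcp - hcm) ^ 2 / 16 :=
  jump_forces_l2_distance_general a b c h h' hac hcb hd1 hd2 hint1 hint2 hftc1 hftc2 hcm hcp hlimL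
    hlimR hjump
end

section
/- Let (x_1, z_1),…,(x_n, z_n) be i.i.d. pairs where x_i takes values in [0,1]^p and z_i is a real random variable with |z_i| ≤ V < ∞ almost surely; let X have the same distribution as x_1. Fix a depth d ≥ 1 and δ ∈ (0,1). Then with probability at least 1 − δ, max over all A ∈ 𝒜̃_{p,d} with P(X ∈ A) > t̄₁(δ) of (1/√(P(X ∈ A))) · |(1/n)∑_{i=1}^n z_i 1_{x_i ∈ A} − E[z_1 1_{x_1 ∈ A}]| is at most 2V·√(t̄₁(δ)). -/
open MeasureTheory Set Filter ProbabilityTheory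
open scoped ENNReal Classical

noncomputable section

/-- `𝒜̃_{p,d}`: closed rectangles in `[0,1]^p` with at most `d` non-full coordinates
whose endpoints all lie on the grid `{0, 1/n, …, 1}`. -/
def gridApd (p n d : ℕ) : Set (Set (Fin p → ℝ)) :=
  {A | ∃ ℓ u : Fin p → ℝ,
    A = Set.univ.pi (fun j => Set.Icc (ℓ j) (u j)) ∧
    (∀ j, Set.Icc (ℓ j) (u j) ⊆ Set.Icc (0 : ℝ) 1) ∧
    (Finset.univ.filter fun j => Set.Icc (ℓ j) (u j) ≠ Set.Icc (0 : ℝ) 1).card ≤ d ∧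
    (∀ j, (∃ k : ℕ, k ≤ n ∧ ℓ j = (k : ℝ) / n) ∧ (∃ k : ℕ, k ≤ n ∧ u j = (k : ℝ) / n))}

/-- `t̄₁(δ) = (4/n) log(2 p^d (n+1)^{2d}/δ)`. -/
def tbar1 (p n d : ℕ) (δ : ℝ) : ℝ :=
  4 / n * Real.log (2 * (p : ℝ) ^ d * ((n : ℝ) + 1) ^ (2 * d) / δ)

/-! For a fixed rectangle `A` with `q = P(X ∈ A)`, the summands `Y_i = z_i 1_{x_i ∈ A}` are
bounded by `V` and have second moment at most `V² q`. Since `exp u ≤ 1 + u + u²` for `|u| ≤ 1`,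
`E exp (c (Y_i - E Y_i)) ≤ exp (c² V² q)` whenever `c V ≤ 1`, and the Chernoff bound with
`c = √t̄₁ / (V √q)` (admissible because `t̄₁ < q`) shows that the normalised deviation exceeds
`2 V √t̄₁` with probability at most `2 exp (-n t̄₁) ≤ δ / (p^d (n+1)^{2d})`. Every grid rectangle is
cut out of `[0,1]^p` by `d` constraints (coordinate, lower and upper grid endpoint), which gives
at most `p^d (n+1)^{2d}` rectangles, and a union bound over them concludes. -/

open Real

section Concentration

variable {Ω : Type*} [MeasurableSpace Ω] {P : Measure Ω} [IsProbabilityMeasure P]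

lemma mgf_sub_integral_le {Y : Ω → ℝ} {V c : ℝ} (hY : AEStronglyMeasurable Y P)
    (hYV : ∀ᵐ ω ∂P, |Y ω| ≤ V) (hcV : |c| * V ≤ 1) :
    mgf (fun ω => Y ω - ∫ ω', Y ω' ∂P) P c ≤ exp (c ^ 2 * ∫ ω, Y ω ^ 2 ∂P) := by
  set m := ∫ ω, Y ω ∂P
  have hYint : Integrable Y P :=
    .of_bound hY V (by filter_upwards [hYV] with ω hω using hω)
  have hY2int : Integrable (fun ω => Y ω ^ 2) P :=
    .of_bound (hY.pow 2) (V ^ 2) (by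
      filter_upwards [hYV] with ω hω
      rw [norm_pow, Real.norm_eq_abs]
      exact pow_le_pow_left₀ (abs_nonneg _) hω 2)
  have hpoint : ∀ᵐ ω ∂P, exp (c * Y ω) ≤ 1 + c * Y ω + c ^ 2 * Y ω ^ 2 := by
    filter_upwards [hYV] with ω hω
    have hcY : |c * Y ω| ≤ 1 := by
      rw [abs_mul]
      exact (mul_le_mul_of_nonneg_left hω (abs_nonneg c)).trans hcV
    have := (abs_le.1 (abs_exp_sub_one_sub_id_le hcY)).2
    nlinarith
  have hlin : Integrable (fun ω => 1 + c * Y ω) P := (integrable_const 1).add (hYint.const_mul c)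
  have hmgf : mgf Y P c ≤ exp (c * m + c ^ 2 * ∫ ω, Y ω ^ 2 ∂P) := calc
    mgf Y P c ≤ ∫ ω, (1 + c * Y ω + c ^ 2 * Y ω ^ 2) ∂P :=
      integral_mono_of_nonneg (.of_forall fun _ => (exp_pos _).le)
        (hlin.add (hY2int.const_mul _)) hpoint
    _ = 1 + (c * m + c ^ 2 * ∫ ω, Y ω ^ 2 ∂P) := by
      rw [integral_add hlin (hY2int.const_mul _),
        integral_add (integrable_const 1) (hYint.const_mul c), integral_const_mul,
        integral_const_mul]
      simp [add_assoc, m]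
    _ ≤ exp (c * m + c ^ 2 * ∫ ω, Y ω ^ 2 ∂P) := by
      linarith [add_one_le_exp (c * m + c ^ 2 * ∫ ω, Y ω ^ 2 ∂P)]
  calc mgf (fun ω => Y ω - m) P c = mgf Y P c * exp (c * -m) := by
        simp_rw [sub_eq_add_neg]; exact mgf_add_const _
    _ ≤ exp (c * m + c ^ 2 * ∫ ω, Y ω ^ 2 ∂P) * exp (c * -m) := by gcongr
    _ = exp (c ^ 2 * ∫ ω, Y ω ^ 2 ∂P) := by rw [← exp_add]; ring_nf

lemma measureReal_le_sum_sub_integral_le {ι : Type*} [Fintype ι] {Y : ι → Ω → ℝ} {V c : ℝ}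
    (hind : iIndepFun Y P) (hY : ∀ i, Measurable (Y i)) (hYV : ∀ i, ∀ᵐ ω ∂P, |Y i ω| ≤ V)
    (hc : 0 ≤ c) (hcV : c * V ≤ 1) (ε : ℝ) :
    P.real {ω | ε ≤ ∑ i, (Y i ω - ∫ ω', Y i ω' ∂P)} ≤
      exp (-c * ε + c ^ 2 * ∑ i, ∫ ω, Y i ω ^ 2 ∂P) := by
  set W : ι → Ω → ℝ := fun i ω => Y i ω - ∫ ω', Y i ω' ∂P
  have hWind : iIndepFun W P :=
    hind.comp (fun i y => y - ∫ ω', Y i ω' ∂P) fun _ => measurable_id.sub_const _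
  have hW : ∀ i, Measurable (W i) := fun i => (hY i).sub_const _
  have hint := hWind.integrable_exp_mul_sum (t := c) hW (s := Finset.univ) fun i _ =>
    integrable_exp_mul_of_le c (V - ∫ ω', Y i ω' ∂P) hc (hW i).aemeasurable (by
      filter_upwards [hYV i] with ω hω
      linarith [le_abs_self (Y i ω)])
  calc P.real {ω | ε ≤ ∑ i, W i ω} = P.real {ω | ε ≤ (∑ i, W i) ω} := by
        simp only [Finset.sum_apply]
    _ ≤ exp (-c * ε) * ∏ i, mgf (W i) P c := by
        rw [← hWind.mgf_sum hW]; exact measure_ge_le_exp_mul_mgf ε hc hint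
    _ ≤ exp (-c * ε) * ∏ i, exp (c ^ 2 * ∫ ω, Y i ω ^ 2 ∂P) := by
        gcongr with i
        · exact fun i _ => mgf_nonneg
        · exact mgf_sub_integral_le (hY i).aestronglyMeasurable (hYV i)
            (by rwa [abs_of_nonneg hc])
    _ = exp (-c * ε + c ^ 2 * ∑ i, ∫ ω, Y i ω ^ 2 ∂P) := by
        rw [← exp_sum, ← exp_add, Finset.mul_sum]

lemma measure_le_abs_sum_sub_integral_le {ι : Type*} [Fintype ι] {Y : ι → Ω → ℝ} {V c : ℝ}
    (hind : iIndepFun Y P) (hY : ∀ i, Measurable (Y i)) (hYV : ∀ i, ∀ᵐ ω ∂P, |Y i ω| ≤ V)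
    (hc : 0 ≤ c) (hcV : c * V ≤ 1) (ε : ℝ) :
    P {ω | ε ≤ |∑ i, (Y i ω - ∫ ω', Y i ω' ∂P)|} ≤
      ENNReal.ofReal (2 * exp (-c * ε + c ^ 2 * ∑ i, ∫ ω, Y i ω ^ 2 ∂P)) := by
  have hupper := measureReal_le_sum_sub_integral_le hind hY hYV hc hcV ε
  have hlower := measureReal_le_sum_sub_integral_le (Y := fun i ω => -Y i ω)
    (hind.comp (fun _ y => -y) fun _ => measurable_neg) (fun i => (hY i).neg)
    (fun i => by simpa only [abs_neg] using hYV i) hc hcV ε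
  simp only [integral_neg, neg_sq, ← neg_sub', Finset.sum_neg_distrib] at hlower
  calc P {ω | ε ≤ |∑ i, (Y i ω - ∫ ω', Y i ω' ∂P)|}
      ≤ P ({ω | ε ≤ ∑ i, (Y i ω - ∫ ω', Y i ω' ∂P)} ∪
          {ω | ε ≤ -∑ i, (Y i ω - ∫ ω', Y i ω' ∂P)}) :=
        measure_mono fun ω (hω : ε ≤ |_|) => le_abs.1 hω
    _ ≤ ENNReal.ofReal (P.real {ω | ε ≤ ∑ i, (Y i ω - ∫ ω', Y i ω' ∂P)}) +
          ENNReal.ofReal (P.real {ω | ε ≤ -∑ i, (Y i ω - ∫ ω', Y i ω' ∂P)}) := by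
        rw [ofReal_measureReal, ofReal_measureReal]; exact measure_union_le _ _
    _ ≤ ENNReal.ofReal (2 * exp (-c * ε + c ^ 2 * ∑ i, ∫ ω, Y i ω ^ 2 ∂P)) := by
        rw [two_mul, ENNReal.ofReal_add (exp_nonneg _) (exp_nonneg _)]
        gcongr

lemma measure_lt_abs_mean_sub_le {n : ℕ} {Y : Fin n → Ω → ℝ} {V q t m : ℝ}
    (hind : iIndepFun Y P) (hY : ∀ i, Measurable (Y i)) (hYV : ∀ i, ∀ᵐ ω ∂P, |Y i ω| ≤ V)
    (hmean : ∀ i, ∫ ω, Y i ω ∂P = m) (hsq : ∀ i, ∫ ω, Y i ω ^ 2 ∂P ≤ V ^ 2 * q)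
    (hV : 0 < V) (ht : 0 < t) (htq : t ≤ q) :
    P {ω | 2 * V * sqrt t < 1 / sqrt q * |1 / (n : ℝ) * ∑ i, Y i ω - m|} ≤
      ENNReal.ofReal (2 * exp (-(n * t))) := by
  have hq : 0 < q := ht.trans_le htq
  -- `c` minimises the Chernoff exponent `-c ε + n c² V² q`, where it equals `-n t`
  set c := sqrt t / (V * sqrt q)
  have hc : 0 ≤ c := by positivity
  have hcV : c * V ≤ 1 := by
    rw [div_mul_eq_mul_div, div_le_one (by positivity)]
    nlinarith [sqrt_le_sqrt htq]
  have hc2 : c ^ 2 * (V ^ 2 * q) = t := by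
    rw [div_pow, mul_pow, sq_sqrt ht.le, sq_sqrt hq.le]; field_simp
  set ε := n * (2 * V * sqrt t * sqrt q)
  have hcε : c * ε = 2 * (n * t) := calc
    c * ε = 2 * n * (sqrt t * sqrt t) * (V * sqrt q / (V * sqrt q)) := by ring
    _ = 2 * (n * t) := by rw [mul_self_sqrt ht.le, div_self (by positivity)]; ring
  have hsum : ∀ ω, n * |1 / (n : ℝ) * ∑ i, Y i ω - m| = |∑ i, (Y i ω - ∫ ω', Y i ω' ∂P)| := by
    intro ω
    simp only [hmean, Finset.sum_sub_distrib, Finset.sum_const, Finset.card_univ,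
      Fintype.card_fin, nsmul_eq_mul]
    rcases n.eq_zero_or_pos with rfl | hn
    · simp
    · rw [show ∑ i, Y i ω - n * m = n * (1 / n * ∑ i, Y i ω - m) by field_simp, abs_mul,
        Nat.abs_cast]
  calc P {ω | 2 * V * sqrt t < 1 / sqrt q * |1 / (n : ℝ) * ∑ i, Y i ω - m|}
      ≤ P {ω | ε ≤ |∑ i, (Y i ω - ∫ ω', Y i ω' ∂P)|} := by
        refine measure_mono fun ω hω => ?_
        simp only [mem_ofPred_eq, ← hsum, ε] at hω ⊢
        rw [one_div_mul_eq_div, lt_div_iff₀ (sqrt_pos.2 hq)] at hω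
        exact mul_le_mul_of_nonneg_left hω.le (Nat.cast_nonneg n)
    _ ≤ ENNReal.ofReal (2 * exp (-c * ε + c ^ 2 * ∑ i, ∫ ω, Y i ω ^ 2 ∂P)) :=
        measure_le_abs_sum_sub_integral_le hind hY hYV hc hcV ε
    _ ≤ ENNReal.ofReal (2 * exp (-(n * t))) := by
        gcongr
        calc -c * ε + c ^ 2 * ∑ i, ∫ ω, Y i ω ^ 2 ∂P
            ≤ -c * ε + c ^ 2 * ∑ _i : Fin n, V ^ 2 * q := by gcongr with i; exact hsq i
          _ = -(n * t) := by
              rw [Finset.sum_const, Finset.card_univ, Fintype.card_fin, nsmul_eq_mul]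
              linear_combination (n : ℝ) * hc2 - hcε

lemma integral_sq_ite_le {α : Type*} [MeasurableSpace α] {x : Ω → α} {z : Ω → ℝ} {A : Set α}
    {V : ℝ} (hx : Measurable x) (hA : MeasurableSet A) (hzV : ∀ᵐ ω ∂P, |z ω| ≤ V) :
    ∫ ω, (if x ω ∈ A then z ω else 0) ^ 2 ∂P ≤ V ^ 2 * P.real (x ⁻¹' A) := by
  have hsq_eq : (fun ω => (if x ω ∈ A then z ω else 0) ^ 2) =
      (x ⁻¹' A).indicator (fun ω => z ω ^ 2) := by
    ext ω; by_cases h : x ω ∈ A <;> simp [h]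
  rw [hsq_eq, integral_indicator (hx hA)]
  refine (le_norm_self _).trans (norm_setIntegral_le_of_norm_le_const_ae' (measure_lt_top _ _) ?_)
  filter_upwards [hzV] with ω hω _
  rw [norm_pow, Real.norm_eq_abs]
  exact pow_le_pow_left₀ (abs_nonneg _) hω 2

lemma measure_lt_normalized_weighted_deviation_le {α : Type*} [MeasurableSpace α] {n : ℕ}
    {x : Fin n → Ω → α} {z : Fin n → Ω → ℝ} {μ : Measure α} {A : Set α} {V t : ℝ} (i₀ : Fin n)
    (hxm : ∀ i, Measurable (x i)) (hzm : ∀ i, Measurable (z i))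
    (hindep : iIndepFun (fun i ω => (x i ω, z i ω)) P)
    (hident : ∀ i, IdentDistrib (fun ω => (x i ω, z i ω)) (fun ω => (x i₀ ω, z i₀ ω)) P P)
    (hzV : ∀ i, ∀ᵐ ω ∂P, |z i ω| ≤ V) (hμ : P.map (x i₀) = μ) (hA : MeasurableSet A)
    (hV : 0 < V) (ht : 0 < t) (htA : t ≤ (μ A).toReal) :
    P {ω | 2 * V * sqrt t < 1 / sqrt (μ A).toReal *
        |1 / (n : ℝ) * (∑ i, if x i ω ∈ A then z i ω else 0) -
          ∫ ω', (if x i₀ ω' ∈ A then z i₀ ω' else 0) ∂P|} ≤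
      ENNReal.ofReal (2 * exp (-(n * t))) := by
  set g : α × ℝ → ℝ := fun w => if w.1 ∈ A then w.2 else 0
  have hg : Measurable g :=
    Measurable.ite (hA.preimage measurable_fst) measurable_snd measurable_const
  have hlaw : ∀ i, P.real (x i ⁻¹' A) = (μ A).toReal := fun i => by
    have hmap : P.map (x i) = P.map (x i₀) := ((hident i).comp measurable_fst).map_eq
    rw [← hμ, ← hmap, Measure.map_apply (hxm i) hA]; rfl
  refine measure_lt_abs_mean_sub_le (Y := fun i ω => g (x i ω, z i ω))
    (hindep.comp (fun _ => g) fun _ => hg) (fun i => hg.comp ((hxm i).prodMk (hzm i)))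
    (fun i => ?_) (fun i => ((hident i).comp hg).integral_eq)
    (fun i => (integral_sq_ite_le (hxm i) hA (hzV i)).trans_eq (by rw [hlaw])) hV ht htA
  filter_upwards [hzV i] with ω hω
  by_cases h : x i ω ∈ A <;> simp [g, h, hω, hV.le]

lemma ofReal_one_sub_le_measure_setOf_forall {α ι : Type*} [Fintype ι] {S : Set α} {g : ι → α}
    (hS : S ⊆ range g) {Q : α → Ω → Prop} {ε : ℝ} (hε : 0 ≤ ε)
    (hQ : ∀ i, P {ω | ¬ Q (g i) ω} ≤ ENNReal.ofReal ε) :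
    ENNReal.ofReal (1 - Fintype.card ι * ε) ≤ P {ω | ∀ a ∈ S, Q a ω} := by
  have hbad : P {ω | ∀ a ∈ S, Q a ω}ᶜ ≤ ENNReal.ofReal (Fintype.card ι * ε) := calc
    P {ω | ∀ a ∈ S, Q a ω}ᶜ ≤ P (⋃ i, {ω | ¬ Q (g i) ω}) := measure_mono fun ω hω => by
        simp only [mem_compl_iff, mem_ofPred_eq, not_forall] at hω
        obtain ⟨a, ha, hQa⟩ := hω
        obtain ⟨i, rfl⟩ := hS ha
        exact mem_iUnion.2 ⟨i, hQa⟩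
    _ ≤ ∑ i, P {ω | ¬ Q (g i) ω} := measure_iUnion_fintype_le _ _
    _ ≤ ∑ _i : ι, ENNReal.ofReal ε := Finset.sum_le_sum fun i _ => hQ i
    _ = ENNReal.ofReal (Fintype.card ι * ε) := by
        rw [Finset.sum_const, Finset.card_univ, nsmul_eq_mul,
          ENNReal.ofReal_mul (Nat.cast_nonneg _), ENNReal.ofReal_natCast]
  rw [ENNReal.ofReal_sub _ (by positivity), ENNReal.ofReal_one, tsub_le_iff_right]
  calc 1 = P univ := measure_univ.symm
    _ ≤ P {ω | ∀ a ∈ S, Q a ω} + P {ω | ∀ a ∈ S, Q a ω}ᶜ := by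
        rw [← union_compl_self {ω | ∀ a ∈ S, Q a ω}]; exact measure_union_le _ _
    _ ≤ _ := by gcongr

end Concentration

lemma Finset.exists_subset_range_of_card_le {α β : Type*} [Nonempty α] [Fintype β]
    (T : Finset α) (h : T.card ≤ Fintype.card β) : ∃ g : β → α, ↑T ⊆ Set.range g := by
  obtain ⟨φ⟩ := Function.Embedding.nonempty_of_card_le (α := T) (by simpa using h)
  exact ⟨Function.extend φ Subtype.val fun _ => Classical.arbitrary α,
    fun j hj => ⟨φ ⟨j, hj⟩, φ.injective.extend_apply _ _ _⟩⟩

section Grid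

variable {p n d : ℕ}

def gridBox (n : ℕ) (f : Fin d → Fin p × Fin (n + 1) × Fin (n + 1)) : Set (Fin p → ℝ) :=
  {y | (∀ j, y j ∈ Icc (0 : ℝ) 1) ∧
    ∀ s, y (f s).1 ∈ Icc (((f s).2.1 : ℕ) / n : ℝ) (((f s).2.2 : ℕ) / n)}

lemma measurableSet_gridBox (f : Fin d → Fin p × Fin (n + 1) × Fin (n + 1)) :
    MeasurableSet (gridBox n f) := by
  simp only [gridBox, ofPred_and, ofPred_forall]
  exact (MeasurableSet.iInter fun j => measurableSet_Icc.preimage (measurable_pi_apply j)).inter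
    (MeasurableSet.iInter fun s => measurableSet_Icc.preimage (measurable_pi_apply _))

lemma card_gridBox_index (p n d : ℕ) :
    (Fintype.card (Fin d → Fin p × Fin (n + 1) × Fin (n + 1)) : ℝ) =
      p ^ d * ((n : ℝ) + 1) ^ (2 * d) := by
  simp only [Fintype.card_fun, Fintype.card_prod, Fintype.card_fin]
  push_cast
  rw [mul_pow, pow_mul, sq]

lemma gridApd_subset_range_gridBox (hp : 0 < p) : gridApd p n d ⊆ range (gridBox (d := d) n) := by
  rintro A ⟨ℓ, u, rfl, hsub, hcard, hgrid⟩
  choose kℓ hkℓ hℓ using fun j => (hgrid j).1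
  choose ku hku hu using fun j => (hgrid j).2
  have : Nonempty (Fin p) := ⟨⟨0, hp⟩⟩
  -- every coordinate where `A` is not full is constrained by some `s`
  obtain ⟨g, hg⟩ :=
    Finset.exists_subset_range_of_card_le (β := Fin d) _ (hcard.trans (Fintype.card_fin d).ge)
  refine ⟨fun s => (g s, ⟨kℓ (g s), Nat.lt_succ_of_le (hkℓ _)⟩,
    ⟨ku (g s), Nat.lt_succ_of_le (hku _)⟩), ?_⟩
  ext y
  simp only [gridBox, mem_ofPred_eq, Set.mem_pi, Set.mem_univ, true_implies, ← hℓ, ← hu]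
  constructor
  · rintro ⟨hbox, hy⟩ j
    by_cases hj : Icc (ℓ j) (u j) = Icc 0 1
    · exact hj ▸ hbox j
    · obtain ⟨s, rfl⟩ := hg (Finset.mem_filter.2 ⟨Finset.mem_univ _, hj⟩)
      exact hy s
  · exact fun hy => ⟨fun j => hsub j (hy j), fun s => hy (g s)⟩

lemma one_le_pow_mul_pow (hp : 0 < p) : (1 : ℝ) ≤ p ^ d * ((n : ℝ) + 1) ^ (2 * d) :=
  one_le_mul_of_one_le_of_one_le (one_le_pow₀ (by exact_mod_cast hp))
    (one_le_pow₀ (by linarith [(n.cast_nonneg : (0 : ℝ) ≤ n)]))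

lemma one_lt_log_arg_tbar1 {δ : ℝ} (hp : 0 < p) (hδ₀ : 0 < δ) (hδ₁ : δ ≤ 1) :
    1 < 2 * (p : ℝ) ^ d * ((n : ℝ) + 1) ^ (2 * d) / δ := by
  rw [lt_div_iff₀ hδ₀, mul_assoc]
  linarith [one_le_pow_mul_pow (n := n) (d := d) hp]

lemma tbar1_pos {δ : ℝ} (hp : 0 < p) (hn : 0 < n) (hδ₀ : 0 < δ) (hδ₁ : δ ≤ 1) :
    0 < tbar1 p n d δ :=
  mul_pos (by positivity) (log_pos (one_lt_log_arg_tbar1 hp hδ₀ hδ₁))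

/-- `n t̄₁(δ) = 4 log R` with `R = 2 p^d (n+1)^{2d} / δ`, so `exp (-n t̄₁(δ)) = R⁻⁴ ≤ R⁻¹`. -/
lemma two_mul_exp_neg_mul_tbar1_le {δ : ℝ} (hp : 0 < p) (hn : 0 < n) (hδ₀ : 0 < δ)
    (hδ₁ : δ ≤ 1) :
    2 * exp (-(n * tbar1 p n d δ)) ≤ δ / (p ^ d * ((n : ℝ) + 1) ^ (2 * d)) := by
  set R := 2 * (p : ℝ) ^ d * ((n : ℝ) + 1) ^ (2 * d) / δ
  have hR : 1 < R := one_lt_log_arg_tbar1 hp hδ₀ hδ₁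
  have hntbar : n * tbar1 p n d δ = 4 * log R := by
    simp only [tbar1, R]; field_simp
  calc 2 * exp (-(n * tbar1 p n d δ)) ≤ 2 * exp (-log R) := by
        rw [hntbar]; gcongr; linarith [log_pos hR]
    _ = δ / (p ^ d * ((n : ℝ) + 1) ^ (2 * d)) := by
        rw [exp_neg, exp_log (by linarith)]
        simp only [R]; field_simp

end Grid

theorem grid_weighted_concentration_general
    (p n d : ℕ) (hp : 1 ≤ p) (hn : 0 < n)
    (Ω : Type*) [MeasurableSpace Ω] (P : Measure Ω) [IsProbabilityMeasure P]
    (x : Fin n → Ω → Fin p → ℝ) (z : Fin n → Ω → ℝ)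
    (hxm : ∀ i, Measurable (x i)) (hzm : ∀ i, Measurable (z i))
    (hindep : iIndepFun (fun i ω => (x i ω, z i ω)) P)
    (hident : ∀ i i' : Fin n, IdentDistrib (fun ω => (x i ω, z i ω))
      (fun ω => (x i' ω, z i' ω)) P P)
    (V : ℝ) (hV : 0 < V) (hzbd : ∀ i, ∀ᵐ ω ∂P, |z i ω| ≤ V)
    (μ : Measure (Fin p → ℝ))
    (hμ : Measure.map (x ⟨0, hn⟩) P = μ)
    (δ : ℝ) (hδ : δ ∈ Set.Ioo (0 : ℝ) 1) :
    ENNReal.ofReal (1 - δ) ≤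
      P {ω | ∀ A ∈ gridApd p n d, tbar1 p n d δ < (μ A).toReal →
        1 / Real.sqrt (μ A).toReal *
            |(1 / (n : ℝ)) * (∑ i : Fin n, if x i ω ∈ A then z i ω else 0)
              - ∫ ω', (if x ⟨0, hn⟩ ω' ∈ A then z ⟨0, hn⟩ ω' else 0) ∂P|
          ≤ 2 * V * Real.sqrt (tbar1 p n d δ)} := by
  have hrect : ∀ A, MeasurableSet A → P {ω | ¬ (tbar1 p n d δ < (μ A).toReal →
      1 / Real.sqrt (μ A).toReal *
          |(1 / (n : ℝ)) * (∑ i : Fin n, if x i ω ∈ A then z i ω else 0)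
            - ∫ ω', (if x ⟨0, hn⟩ ω' ∈ A then z ⟨0, hn⟩ ω' else 0) ∂P|
        ≤ 2 * V * Real.sqrt (tbar1 p n d δ))} ≤
      ENNReal.ofReal (δ / (p ^ d * ((n : ℝ) + 1) ^ (2 * d))) := by
    intro A hA
    by_cases hq : tbar1 p n d δ < (μ A).toReal
    · simp only [hq, true_imp_iff, not_le]
      exact (measure_lt_normalized_weighted_deviation_le ⟨0, hn⟩ hxm hzm hindep
        (fun i => hident i _) hzbd hμ hA hV (tbar1_pos hp hn hδ.1 hδ.2.le) hq.le).trans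
        (ENNReal.ofReal_le_ofReal (two_mul_exp_neg_mul_tbar1_le hp hn hδ.1 hδ.2.le))
    · simp [hq]
  calc ENNReal.ofReal (1 - δ) = ENNReal.ofReal
        (1 - Fintype.card (Fin d → Fin p × Fin (n + 1) × Fin (n + 1)) *
          (δ / (p ^ d * ((n : ℝ) + 1) ^ (2 * d)))) := by
        rw [card_gridBox_index, mul_div_cancel₀ _ (by positivity)]
    _ ≤ _ := ofReal_one_sub_le_measure_setOf_forall (gridApd_subset_range_gridBox hp)
        (div_nonneg hδ.1.le (by positivity)) fun f => hrect _ (measurableSet_gridBox f)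

/-- **Lemma (weighted concentration over grid rectangles).**
Let `(x_i, z_i)` be i.i.d. with `x_i ∈ [0,1]^p` and `|z_i| ≤ V` a.s., and `X ~ x_1`.
Then with probability at least `1 − δ`, for every `A ∈ 𝒜̃_{p,d}` with `P(X∈A) > t̄₁(δ)`,
`(1/√P(X∈A)) |(1/n)∑ z_i 1_{x_i∈A} − E[z_1 1_{x_1∈A}]| ≤ 2V√t̄₁(δ)`. -/
theorem grid_weighted_concentration
    (p n d : ℕ) (hp : 1 ≤ p) (hn : 0 < n) (hd : 1 ≤ d)
    (Ω : Type*) [MeasurableSpace Ω] (P : Measure Ω) [IsProbabilityMeasure P]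
    (x : Fin n → Ω → Fin p → ℝ) (z : Fin n → Ω → ℝ)
    (hxm : ∀ i, Measurable (x i)) (hzm : ∀ i, Measurable (z i))
    (hxbox : ∀ i ω, x i ω ∈ Set.univ.pi fun _ => Set.Icc (0 : ℝ) 1)
    (hindep : iIndepFun (fun i ω => (x i ω, z i ω)) P)
    (hident : ∀ i i' : Fin n, IdentDistrib (fun ω => (x i ω, z i ω))
      (fun ω => (x i' ω, z i' ω)) P P)
    (V : ℝ) (hV : 0 < V) (hzbd : ∀ i, ∀ᵐ ω ∂P, |z i ω| ≤ V)
    (μ : Measure (Fin p → ℝ))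
    (hμ : Measure.map (x ⟨0, hn⟩) P = μ)
    (δ : ℝ) (hδ : δ ∈ Set.Ioo (0 : ℝ) 1) :
    ENNReal.ofReal (1 - δ) ≤
      P {ω | ∀ A ∈ gridApd p n d, tbar1 p n d δ < (μ A).toReal →
        1 / Real.sqrt (μ A).toReal *
            |(1 / (n : ℝ)) * (∑ i : Fin n, if x i ω ∈ A then z i ω else 0)
              - ∫ ω', (if x ⟨0, hn⟩ ω' ∈ A then z ⟨0, hn⟩ ω' else 0) ∂P|
          ≤ 2 * V * Real.sqrt (tbar1 p n d δ)} :=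
  grid_weighted_concentration_general p n d hp hn Ω P x z hxm hzm hindep hident V hV hzbd μ hμ δ hδ
end
end

section
/- Let x_1,…,x_n be i.i.d. random vectors with distribution μ supported on [0,1]^p. Let 𝒟 be a finite collection of measurable subsets of [0,1]^p satisfying P(x_1 ∈ D) ≤ ᾱ for all D ∈ 𝒟, for some ᾱ ∈ (0,1). Fix δ ∈ (0,1) and define w(ᾱ, δ) := max{e²ᾱ, (1/n)·log(|𝒟|/δ)}. If w(ᾱ, δ) ≤ 3/4, then with probability at least 1 − δ, max_{D ∈ 𝒟} (1/n)∑_{i=1}^n 1_{x_i ∈ D} ≤ w(ᾱ, δ). -/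
open MeasureTheory Set Filter ProbabilityTheory
open scoped ENNReal Classical

noncomputable section

/-!
Chernoff's bound with the exponent `t = log (w / ᾱ) ≥ 2`: since `1 + (eᵗ - 1) ᾱ = 1 + w - ᾱ ≤ eʷ`,
each count `∑ᵢ 1_{xᵢ ∈ D}` reaches `n w` with probability at most `e^{-tnw} e^{nw} ≤ e^{-nw}`,
and `|𝒟| e^{-nw} ≤ δ` because `log (|𝒟| / δ) ≤ n w`. A union bound over `𝒟` concludes.
-/

open Real

lemma exp_neg_log_div_mul_mul_pow_le {a w : ℝ} (ha : 0 < a) (hw : exp 2 * a ≤ w) (n : ℕ) :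
    exp (-log (w / a) * (n * w)) * (1 + (exp (log (w / a)) - 1) * a) ^ n ≤ exp (-(n * w)) := by
  have hw0 : 0 < w := (by positivity : 0 < exp 2 * a).trans_le hw
  have hlog : 2 ≤ log (w / a) := by
    rw [le_log_iff_exp_le (by positivity), le_div_iff₀ ha]
    exact hw
  have hbase : 1 + (exp (log (w / a)) - 1) * a ≤ exp w := by
    rw [exp_log (by positivity), sub_mul, div_mul_cancel₀ _ ha.ne']
    linarith [add_one_le_exp w]
  calc exp (-log (w / a) * (n * w)) * (1 + (exp (log (w / a)) - 1) * a) ^ n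
      ≤ exp (-log (w / a) * (n * w)) * exp w ^ n := by
        gcongr
        nlinarith [one_le_exp (zero_le_two.trans hlog)]
    _ = exp (-(log (w / a) - 1) * (n * w)) := by rw [← exp_nat_mul, ← exp_add]; ring_nf
    _ ≤ exp (-(n * w)) := by gcongr; nlinarith [mul_nonneg n.cast_nonneg hw0.le]

lemma exp_mul_indicator_one {α : Type*} (s : Set α) (t : ℝ) (y : α) :
    exp (t * s.indicator 1 y) = 1 + (exp t - 1) * s.indicator 1 y := by
  by_cases h : y ∈ s <;> simp [h]

section

variable {Ω : Type*} [MeasurableSpace Ω] {P : Measure Ω} [IsProbabilityMeasure P]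

lemma integrable_exp_mul_indicator_one {s : Set Ω} (hs : MeasurableSet s) (t : ℝ) :
    Integrable (fun ω => exp (t * s.indicator 1 ω)) P := by
  simp only [exp_mul_indicator_one]
  exact (integrable_const 1).add (((integrable_const 1).indicator hs).const_mul _)

lemma mgf_indicator_one {s : Set Ω} (hs : MeasurableSet s) (t : ℝ) :
    mgf (s.indicator 1) P t = 1 + (exp t - 1) * P.real s := by
  simp only [mgf, exp_mul_indicator_one]
  rw [integral_add (integrable_const 1) (((integrable_const 1).indicator hs).const_mul _),
    integral_const, integral_const_mul, integral_indicator_one hs]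
  simp

lemma ofReal_one_sub_le_of_measureReal_compl_le {s : Set Ω} {δ : ℝ} (h : P.real sᶜ ≤ δ) :
    ENNReal.ofReal (1 - δ) ≤ P s := by
  rw [← ofReal_measureReal]
  refine ENNReal.ofReal_le_ofReal ?_
  have := measureReal_union_le (μ := P) s sᶜ
  rw [union_compl_self, probReal_univ] at this
  linarith

variable {ι E : Type*} [Fintype ι] [MeasurableSpace E] {X : ι → Ω → E} {D : Set E} {a : ℝ}

lemma measureReal_le_sum_indicator_le (hX : ∀ i, Measurable (X i)) (hindep : iIndepFun X P)
    (hD : MeasurableSet D) (hP : ∀ i, P.real (X i ⁻¹' D) ≤ a) {t : ℝ} (ht : 0 ≤ t) (c : ℝ) :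
    P.real {ω | c ≤ ∑ i, D.indicator 1 (X i ω)} ≤
      exp (-t * c) * (1 + (exp t - 1) * a) ^ Fintype.card ι := by
  set Y : ι → Ω → ℝ := fun i => D.indicator 1 ∘ X i
  have hY : ∀ i, Y i = (X i ⁻¹' D).indicator 1 := fun i => rfl
  have hYm : ∀ i, Measurable (Y i) := fun i => (measurable_const.indicator hD).comp (hX i)
  have hYindep : iIndepFun Y P := hindep.comp _ fun _ => measurable_const.indicator hD
  have hmgf : ∀ i, mgf (Y i) P t ≤ 1 + (exp t - 1) * a := fun i => by
    rw [hY, mgf_indicator_one (hX i hD)]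
    gcongr
    · linarith [one_le_exp ht]
    · exact hP i
  have hint : Integrable (fun ω => exp (t * (∑ i, Y i) ω)) P :=
    hYindep.integrable_exp_mul_sum hYm fun i _ =>
      hY i ▸ integrable_exp_mul_indicator_one (hX i hD) t
  calc P.real {ω | c ≤ ∑ i, D.indicator 1 (X i ω)}
      = P.real {ω | c ≤ (∑ i, Y i) ω} := by simp [Y]
    _ ≤ exp (-t * c) * mgf (∑ i, Y i) P t := measure_ge_le_exp_mul_mgf c ht hint
    _ ≤ exp (-t * c) * (1 + (exp t - 1) * a) ^ Fintype.card ι := by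
      rw [hYindep.mgf_sum hYm, ← Finset.card_univ, ← Finset.prod_const]
      gcongr with i
      exacts [fun i _ => mgf_nonneg, hmgf i]

lemma measureReal_card_mul_le_sum_indicator_le_exp (hX : ∀ i, Measurable (X i))
    (hindep : iIndepFun X P) (hD : MeasurableSet D) (hP : ∀ i, P.real (X i ⁻¹' D) ≤ a)
    (ha : 0 < a) {w : ℝ} (hw : exp 2 * a ≤ w) :
    P.real {ω | Fintype.card ι * w ≤ ∑ i, D.indicator 1 (X i ω)} ≤
      exp (-(Fintype.card ι * w)) := by
  have ht : 0 ≤ log (w / a) :=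
    log_nonneg <| (le_div_iff₀ ha).2 <| by nlinarith [one_le_exp zero_le_two]
  exact (measureReal_le_sum_indicator_le hX hindep hD hP ht _).trans
    (exp_neg_log_div_mul_mul_pow_le ha hw _)

end

theorem small_set_frequency_bound_general
    (p n : ℕ) (hn : 1 ≤ n)
    (Ω : Type*) [MeasurableSpace Ω] (P : Measure Ω) [IsProbabilityMeasure P]
    (μ : Measure (Fin p → ℝ))
    (x : Fin n → Ω → Fin p → ℝ)
    (hxm : ∀ i, Measurable (x i))
    (hindep : iIndepFun x P)
    (hxdist : ∀ i, Measure.map (x i) P = μ)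
    (𝒟 : Finset (Set (Fin p → ℝ))) (h𝒟m : ∀ D ∈ 𝒟, MeasurableSet D)
    (abar δ : ℝ) (habar : abar ∈ Set.Ioo (0 : ℝ) 1) (hδ : δ ∈ Set.Ioo (0 : ℝ) 1)
    (h𝒟b : ∀ D ∈ 𝒟, (μ D).toReal ≤ abar) :
    ENNReal.ofReal (1 - δ) ≤
      P {ω | ∀ D ∈ 𝒟,
        (1 / (n : ℝ)) * (∑ i : Fin n, if x i ω ∈ D then (1 : ℝ) else 0)
          ≤ max (Real.exp 1 ^ 2 * abar) (1 / (n : ℝ) * Real.log (𝒟.card / δ))} := by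
  set w := max (exp 1 ^ 2 * abar) (1 / (n : ℝ) * log (𝒟.card / δ))
  have hn0 : (0 : ℝ) < n := by exact_mod_cast hn
  have hbad : ∀ D ∈ 𝒟, P.real {ω | n * w ≤ ∑ i, D.indicator 1 (x i ω)} ≤ exp (-(n * w)) := by
    intro D hD
    have hP : ∀ i, P.real (x i ⁻¹' D) ≤ abar := fun i => by
      rw [measureReal_def, ← Measure.map_apply (hxm i) (h𝒟m D hD), hxdist]
      exact h𝒟b D hD
    have hw : exp 2 * abar ≤ w := by
      rw [show exp 2 = exp 1 ^ 2 by rw [← exp_nat_mul]; norm_num]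
      exact le_max_left _ _
    simpa using measureReal_card_mul_le_sum_indicator_le_exp hxm hindep (h𝒟m D hD) hP habar.1 hw
  have hcard : 𝒟.card * exp (-(n * w)) ≤ δ := by
    have hlog : log (𝒟.card / δ) ≤ n * w := by
      rw [← div_le_iff₀' hn0, ← one_div_mul_eq_div]
      exact le_max_right _ _
    rw [exp_neg, ← div_eq_mul_inv, div_le_iff₀ (exp_pos _), mul_comm, ← div_le_iff₀ hδ.1]
    exact (le_exp_log _).trans (exp_le_exp.2 hlog)
  refine ofReal_one_sub_le_of_measureReal_compl_le ?_
  calc P.real {ω | ∀ D ∈ 𝒟, 1 / (n : ℝ) * (∑ i, if x i ω ∈ D then (1 : ℝ) else 0) ≤ w}ᶜ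
      ≤ P.real (⋃ D ∈ 𝒟, {ω | n * w ≤ ∑ i, D.indicator 1 (x i ω)}) := by
        refine measureReal_mono (fun ω hω => ?_) (measure_ne_top _ _)
        simp only [mem_compl_iff, mem_ofPred_eq, not_forall, not_le] at hω
        obtain ⟨D, hD, hlt⟩ := hω
        rw [one_div_mul_eq_div, lt_div_iff₀' hn0] at hlt
        exact mem_biUnion hD (by simpa [indicator_apply] using hlt.le)
    _ ≤ ∑ D ∈ 𝒟, P.real {ω | n * w ≤ ∑ i, D.indicator 1 (x i ω)} :=
        measureReal_biUnion_finset_le _ _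
    _ ≤ ∑ D ∈ 𝒟, exp (-(n * w)) := Finset.sum_le_sum hbad
    _ ≤ δ := by simpa using hcard

/-- **Lemma (uniform upper bound on empirical frequencies of small sets).**
Let `x_1,…,x_n` be i.i.d. `μ` supported on `[0,1]^p`, and `𝒟` a finite collection of
measurable sets with `P(x_1 ∈ D) ≤ ᾱ` for all `D ∈ 𝒟`. If
`w(ᾱ,δ) = max{e²ᾱ, (1/n) log(|𝒟|/δ)} ≤ 3/4`, then with probability at least `1 − δ`,
`max_{D∈𝒟} (1/n)∑ 1_{x_i∈D} ≤ w(ᾱ,δ)`. -/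
theorem small_set_frequency_bound
    (p n : ℕ) (hn : 1 ≤ n)
    (Ω : Type*) [MeasurableSpace Ω] (P : Measure Ω) [IsProbabilityMeasure P]
    (μ : Measure (Fin p → ℝ)) [IsProbabilityMeasure μ] (hsupp : μ (box p)ᶜ = 0)
    (x : Fin n → Ω → Fin p → ℝ)
    (hxm : ∀ i, Measurable (x i))
    (hindep : iIndepFun x P)
    (hxdist : ∀ i, Measure.map (x i) P = μ)
    (𝒟 : Finset (Set (Fin p → ℝ))) (h𝒟m : ∀ D ∈ 𝒟, MeasurableSet D)
    (abar δ : ℝ) (habar : abar ∈ Set.Ioo (0 : ℝ) 1) (hδ : δ ∈ Set.Ioo (0 : ℝ) 1)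
    (h𝒟b : ∀ D ∈ 𝒟, (μ D).toReal ≤ abar)
    (hw : max (Real.exp 1 ^ 2 * abar) (1 / (n : ℝ) * Real.log (𝒟.card / δ)) ≤ 3 / 4) :
    ENNReal.ofReal (1 - δ) ≤
      P {ω | ∀ D ∈ 𝒟,
        (1 / (n : ℝ)) * (∑ i : Fin n, if x i ω ∈ D then (1 : ℝ) else 0)
          ≤ max (Real.exp 1 ^ 2 * abar) (1 / (n : ℝ) * Real.log (𝒟.card / δ))} :=
  small_set_frequency_bound_general p n hn Ω P μ x hxm hindep hxdist 𝒟 h𝒟m abar δ habar hδ h𝒟b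
end
end
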